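/- arXiv:1206.5766 — 4 statements merged into one kernel-verified Lean document; each statement's English description precedes it below -/
import Mathlib

section
/- In the mixture of spherical Gaussians model under the non-degeneracy condition, suppose η ∈ ℝ^d is such that ηᵀμ_1,…,ηᵀμ_k are distinct and non-zero. Then the matrix M_GMM(η) := M_2^{†1/2} M_3(η) M_2^{†1/2} is diagonalizable, it has exactly k non-zero eigenvalues each of geometric multiplicity one, and its non-zero eigenvalue/unit-eigenvector pairs (λ_1,v_1),…,(λ_k,v_k) satisfy, for some permutation π of [k] and signs s_1,…,s_k ∈ {±1}: λ_i = ηᵀμ_{π(i)} and M_2^{1/2} v_i = s_i √(w_{π(i)}) μ_{π(i)}. Consequently μ_{π(i)} = (λ_i / (ηᵀ M_2^{1/2} v_i)) M_2^{1/2} v_i, σ_i² = (1/w_i) e_iᵀ A^† M_1, and w_i = e_iᵀ A^† E[x]. -/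
open Matrix
open scoped BigOperators Classical

/-- The four Penrose conditions characterizing the Moore–Penrose pseudoinverse. -/
def IsMoorePenrose {m n : ℕ} (M : Matrix (Fin m) (Fin n) ℝ) (X : Matrix (Fin n) (Fin m) ℝ) : Prop :=
  M * X * M = M ∧ X * M * X = X ∧ (M * X)ᵀ = M * X ∧ (X * M)ᵀ = X * M

/-- Moore–Penrose pseudoinverse (it exists and is unique for every real matrix). -/
noncomputable def pinv {m n : ℕ} (M : Matrix (Fin m) (Fin n) ℝ) : Matrix (Fin n) (Fin m) ℝ :=
  if h : ∃ X, IsMoorePenrose M X then h.choose else 0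

/-- Positive semidefinite square root of a matrix (junk value `0` if not psd). -/
noncomputable def psdSqrt {n : ℕ} (M : Matrix (Fin n) (Fin n) ℝ) : Matrix (Fin n) (Fin n) ℝ :=
  if h : M.PosSemidef then
    (h.1.eigenvectorUnitary : Matrix (Fin n) (Fin n) ℝ) *
      Matrix.diagonal ((↑) ∘ (√·) ∘ h.1.eigenvalues) *
      (star h.1.eigenvectorUnitary : Matrix (Fin n) (Fin n) ℝ)
  else 0

/-- Pseudoinverse square root `M^{†1/2}` of a psd matrix. -/
noncomputable def pinvSqrt {n : ℕ} (M : Matrix (Fin n) (Fin n) ℝ) : Matrix (Fin n) (Fin n) ℝ :=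
  pinv (psdSqrt M)

/-!
Put `B = A · diag(√w)`, so that `M₂ = B Bᵀ` and `M₃(η) = B · diag(ηᵀμ) · Bᵀ`. Since `B` has full
column rank, it has a polar decomposition `B = P S` with `Pᵀ P = 1` and `S` positive definite.
Then `M₂^{1/2} = P S Pᵀ` and `M₂^{†1/2} = P S⁻¹ Pᵀ`, hence `M_GMM(η) = P · diag(ηᵀμ) · Pᵀ`.
An eigenvector of this matrix for a non-zero eigenvalue lies in the range of `P`, on which it
acts as `diag(ηᵀμ)`; as the `ηᵀμ_i` are distinct and non-zero, the non-zero eigenpairs are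
exactly `(ηᵀμ_i, P eᵢ)`, so `π = id` and all signs are `+1`. Finally
`M₂^{1/2} P eᵢ = P S eᵢ = B eᵢ = √wᵢ μᵢ`, and `A^† A = 1` reads off the weights and variances.
-/

theorem transpose_mul_cancel_left {m n p : Type*} [Fintype m] [DecidableEq n] [Fintype n]
    {P : Matrix m n ℝ} (hP : Pᵀ * P = 1) (X : Matrix n p ℝ) : Pᵀ * (P * X) = X := by
  rw [← Matrix.mul_assoc, hP, Matrix.one_mul]

theorem dotProduct_col_self_of_orthonormal {m n : Type*} [Fintype m] [DecidableEq n]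
    {P : Matrix m n ℝ} (hP : Pᵀ * P = 1) (i : n) : P.col i ⬝ᵥ P.col i = 1 := by
  simpa [mul_apply, dotProduct] using congrFun (congrFun hP i) i

theorem eq_of_diagonal_mulVec_eq_smul {n K : Type*} [Fintype n] [DecidableEq n] [Field K]
    {lam y : n → K} {t : K} (h : diagonal lam *ᵥ y = t • y) {j : n} (hj : y j ≠ 0) :
    lam j = t := by
  have hj' := congrFun h j
  rw [mulVec_diagonal, Pi.smul_apply, smul_eq_mul] at hj'
  exact mul_right_cancel₀ hj hj'

theorem Matrix.IsHermitian.exists_diagonalization {n : Type*} [Fintype n] [DecidableEq n]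
    {M : Matrix n n ℝ} (hM : M.IsHermitian) :
    ∃ (C : Matrix n n ℝ) (D : n → ℝ), IsUnit C.det ∧ M = C * diagonal D * C⁻¹ := by
  set U := hM.eigenvectorUnitary
  have hU : (U : Matrix n n ℝ) * star (U : Matrix n n ℝ) = 1 := Unitary.mul_star_self_of_mem U.2
  refine ⟨U, hM.eigenvalues, isUnit_det_of_right_inverse hU, ?_⟩
  rw [inv_eq_right_inv hU]
  simpa [Unitary.conjStarAlgAut_apply] using hM.spectral_theorem

theorem mulVec_injective_of_rank_eq {d k : ℕ} {A : Matrix (Fin d) (Fin k) ℝ} (h : A.rank = k) :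
    Function.Injective A.mulVec := by
  rw [mulVec_injective_iff, linearIndependent_iff_card_eq_finrank_span, Set.finrank,
    ← rank_eq_finrank_span_cols, h, Fintype.card_fin]

theorem mulVec_injective_mul_diagonal {m n K : Type*} [Fintype n] [DecidableEq n] [Field K]
    {A : Matrix m n K} (hA : Function.Injective A.mulVec) {c : n → K} (hc : ∀ i, c i ≠ 0) :
    Function.Injective (A * diagonal c).mulVec := by
  have hD : IsUnit (diagonal c) := isUnit_diagonal.mpr (Pi.isUnit_iff.mpr fun i => (hc i).isUnit)
  simpa [Function.comp_def, mulVec_mulVec] using hA.comp (mulVec_injective_iff_isUnit.mpr hD)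

theorem sum_smul_eq_mulVec {m n R : Type*} [Fintype n] [CommSemiring R] (c : n → R)
    (μ : n → m → R) : ∑ i, c i • μ i = (of fun r i => μ i r) *ᵥ c := by
  ext r
  simp [mulVec, dotProduct, Finset.sum_apply, mul_comm]

theorem sum_smul_vecMulVec_eq_conj_diagonal {m n : Type*} [Fintype n] [DecidableEq n] (w : n → ℝ)
    (hw : ∀ i, 0 ≤ w i) (μ : n → m → ℝ) (a : n → ℝ) :
    ∑ i, (w i * a i) • vecMulVec (μ i) (μ i) =
      (of fun r i => μ i r) * diagonal (fun i => √(w i)) * diagonal a *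
        ((of fun r i => μ i r) * diagonal fun i => √(w i))ᵀ := by
  ext r s
  rw [mul_apply, Matrix.sum_apply]
  simp only [Matrix.smul_apply, vecMulVec_apply, smul_eq_mul, transpose_apply, mul_diagonal,
    of_apply]
  refine Finset.sum_congr rfl fun i _ => ?_
  linear_combination (a i * μ i r * μ i s) * (Real.mul_self_sqrt (hw i)).symm

section SquareRoot

open scoped MatrixOrder

theorem exists_orthonormal_mul_posDef {m n : Type*} [Fintype m] [Fintype n] [DecidableEq n]
    (B : Matrix m n ℝ) (hB : Function.Injective B.mulVec) :
    ∃ (P : Matrix m n ℝ) (S : Matrix n n ℝ), Pᵀ * P = 1 ∧ S.PosDef ∧ B = P * S := by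
  have hG : (Bᵀ * B).PosDef := by simpa using PosDef.conjTranspose_mul_self B hB
  set S := CFC.sqrt (Bᵀ * B)
  have hSS : S * S = Bᵀ * B := CFC.sqrt_mul_sqrt_self _ hG.posSemidef.nonneg
  have hS : S.PosSemidef := (CFC.sqrt_nonneg _).posSemidef
  have hSunit : IsUnit S := isUnit_of_mul_isUnit_left (hSS ▸ hG.isUnit)
  have hSdet : IsUnit S.det := (isUnit_iff_isUnit_det S).mp hSunit
  have hSt : Sᵀ = S := by simpa using hS.1.eq
  refine ⟨B * S⁻¹, S, ?_, hS.posDef_iff_isUnit.mpr hSunit,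
    (nonsing_inv_mul_cancel_right _ _ hSdet).symm⟩
  rw [transpose_mul, transpose_nonsing_inv, hSt, Matrix.mul_assoc, ← Matrix.mul_assoc Bᵀ, ← hSS,
    mul_nonsing_inv_cancel_right _ _ hSdet, nonsing_inv_mul _ hSdet]

theorem psdSqrt_eq_cfcSqrt {n : ℕ} {M : Matrix (Fin n) (Fin n) ℝ} (hM : M.PosSemidef) :
    psdSqrt M = CFC.sqrt M := by
  rw [psdSqrt, dif_pos hM, CFC.sqrt_eq_real_sqrt M hM.nonneg, cfcₙ_eq_cfc, hM.1.cfc_eq,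
    Matrix.IsHermitian.cfc]
  simp [Function.comp_def]

theorem psdSqrt_mul_self {n : ℕ} {N : Matrix (Fin n) (Fin n) ℝ} (hN : N.PosSemidef) :
    psdSqrt (N * N) = N := by
  have hNN : (N * N).PosSemidef := by
    simpa only [hN.1.eq] using posSemidef_conjTranspose_mul_self N
  rw [psdSqrt_eq_cfcSqrt hNN]
  exact CFC.sqrt_unique rfl hN.nonneg

end SquareRoot

section MoorePenrose

variable {m n : ℕ}

theorem IsMoorePenrose.unique {M : Matrix (Fin m) (Fin n) ℝ} {X Y : Matrix (Fin n) (Fin m) ℝ}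
    (hX : IsMoorePenrose M X) (hY : IsMoorePenrose M Y) : X = Y := by
  obtain ⟨hX1, hX2, hX3, hX4⟩ := hX
  obtain ⟨hY1, hY2, hY3, hY4⟩ := hY
  have hMX : M * X = M * Y := by
    calc M * X = (M * Y * M * X)ᵀ := by rw [hY1, hX3]
      _ = (M * X)ᵀ * (M * Y)ᵀ := by rw [← transpose_mul, Matrix.mul_assoc (M * Y)]
      _ = M * X * M * Y := by rw [hX3, hY3, Matrix.mul_assoc (M * X)]
      _ = M * Y := by rw [hX1]
  have hXM : X * M = Y * M := by
    calc X * M = (X * (M * Y * M))ᵀ := by rw [hY1, hX4]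
      _ = (Y * M)ᵀ * (X * M)ᵀ := by rw [← transpose_mul, Matrix.mul_assoc, Matrix.mul_assoc]
      _ = Y * (M * X * M) := by rw [hY4, hX4]; simp only [Matrix.mul_assoc]
      _ = Y * M := by rw [hX1]
  calc X = X * M * X := hX2.symm
    _ = Y * M * Y := by rw [hXM, Matrix.mul_assoc, hMX, ← Matrix.mul_assoc]
    _ = Y := hY2

theorem pinv_eq_of_isMoorePenrose {M : Matrix (Fin m) (Fin n) ℝ} {X : Matrix (Fin n) (Fin m) ℝ}
    (h : IsMoorePenrose M X) : pinv M = X := by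
  have hex : ∃ Y, IsMoorePenrose M Y := ⟨X, h⟩
  rw [pinv, dif_pos hex]
  exact hex.choose_spec.unique h

end MoorePenrose

section PolarFactors

variable {d k : ℕ} {P : Matrix (Fin d) (Fin k) ℝ} {S : Matrix (Fin k) (Fin k) ℝ}

theorem pinv_mul_of_orthonormal (hP : Pᵀ * P = 1) (hS : IsUnit S.det) :
    pinv (P * S) = S⁻¹ * Pᵀ := by
  apply pinv_eq_of_isMoorePenrose
  have hXM : S⁻¹ * Pᵀ * (P * S) = 1 := by
    rw [Matrix.mul_assoc, transpose_mul_cancel_left hP, nonsing_inv_mul _ hS]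
  have hMX : P * S * (S⁻¹ * Pᵀ) = P * Pᵀ := by
    rw [Matrix.mul_assoc, mul_nonsing_inv_cancel_left _ _ hS]
  refine ⟨?_, ?_, ?_, ?_⟩
  · rw [Matrix.mul_assoc, hXM, Matrix.mul_one]
  · rw [hXM, Matrix.one_mul]
  · rw [hMX, transpose_mul, transpose_transpose]
  · rw [hXM, transpose_one]

theorem pinv_conj_of_orthonormal (hP : Pᵀ * P = 1) (hS : IsUnit S.det) :
    pinv (P * S * Pᵀ) = P * S⁻¹ * Pᵀ := by
  apply pinv_eq_of_isMoorePenrose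
  have hMX : P * S * Pᵀ * (P * S⁻¹ * Pᵀ) = P * Pᵀ := by
    simp only [Matrix.mul_assoc, transpose_mul_cancel_left hP, mul_nonsing_inv_cancel_left _ _ hS]
  have hXM : P * S⁻¹ * Pᵀ * (P * S * Pᵀ) = P * Pᵀ := by
    simp only [Matrix.mul_assoc, transpose_mul_cancel_left hP, nonsing_inv_mul_cancel_left _ _ hS]
  refine ⟨?_, ?_, ?_, ?_⟩
  · rw [hMX]; simp only [Matrix.mul_assoc, transpose_mul_cancel_left hP]
  · rw [hXM]; simp only [Matrix.mul_assoc, transpose_mul_cancel_left hP]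
  · rw [hMX, transpose_mul, transpose_transpose]
  · rw [hXM, transpose_mul, transpose_transpose]

theorem psdSqrt_mul_transpose_of_polar (hP : Pᵀ * P = 1) (hS : S.PosSemidef) :
    psdSqrt (P * S * (P * S)ᵀ) = P * S * Pᵀ := by
  have hSt : Sᵀ = S := by simpa using hS.1.eq
  have hsq : P * S * (P * S)ᵀ = P * S * Pᵀ * (P * S * Pᵀ) := by
    rw [transpose_mul, hSt]
    simp only [Matrix.mul_assoc, transpose_mul_cancel_left hP]
  rw [hsq, psdSqrt_mul_self]
  simpa using hS.mul_mul_conjTranspose_same P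

theorem pinvSqrt_mul_transpose_of_polar (hP : Pᵀ * P = 1) (hS : S.PosDef) :
    pinvSqrt (P * S * (P * S)ᵀ) = P * S⁻¹ * Pᵀ := by
  rw [pinvSqrt, psdSqrt_mul_transpose_of_polar hP hS.posSemidef,
    pinv_conj_of_orthonormal hP ((isUnit_iff_isUnit_det S).mp hS.isUnit)]

theorem pinvSqrt_mul_conj_mul_pinvSqrt_of_polar (hP : Pᵀ * P = 1) (hS : S.PosDef)
    (D : Matrix (Fin k) (Fin k) ℝ) :
    pinvSqrt (P * S * (P * S)ᵀ) * (P * S * D * (P * S)ᵀ) * pinvSqrt (P * S * (P * S)ᵀ) =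
      P * D * Pᵀ := by
  have hSdet : IsUnit S.det := (isUnit_iff_isUnit_det S).mp hS.isUnit
  have hSt : Sᵀ = S := by simpa using hS.1.eq
  rw [pinvSqrt_mul_transpose_of_polar hP hS, transpose_mul, hSt]
  simp only [Matrix.mul_assoc, transpose_mul_cancel_left hP, nonsing_inv_mul_cancel_left _ _ hSdet,
    mul_nonsing_inv_cancel_left _ _ hSdet]

end PolarFactors

theorem pinv_mul_self_of_injective {d k : ℕ} {A : Matrix (Fin d) (Fin k) ℝ}
    (hA : Function.Injective A.mulVec) : pinv A * A = 1 := by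
  obtain ⟨P, S, hP, hS, rfl⟩ := exists_orthonormal_mul_posDef A hA
  have hSdet : IsUnit S.det := (isUnit_iff_isUnit_det S).mp hS.isUnit
  rw [pinv_mul_of_orthonormal hP hSdet, Matrix.mul_assoc, transpose_mul_cancel_left hP,
    nonsing_inv_mul _ hSdet]

section OrthonormalColumns

variable {m n : Type*} [Fintype m] [Fintype n] [DecidableEq n] {P : Matrix m n ℝ}
  {lam : n → ℝ} {t : ℝ} {u : m → ℝ}

theorem conj_mulVec_col_of_orthonormal (hP : Pᵀ * P = 1) (S : Matrix n n ℝ) (i : n) :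
    (P * S * Pᵀ) *ᵥ P.col i = (P * S).col i := by
  rw [← mulVec_single_one, ← mulVec_single_one, mulVec_mulVec, Matrix.mul_assoc, hP,
    Matrix.mul_one]

theorem mulVec_col_of_orthonormal (hP : Pᵀ * P = 1) (lam : n → ℝ) (i : n) :
    (P * diagonal lam * Pᵀ) *ᵥ P.col i = lam i • P.col i := by
  rw [conj_mulVec_col_of_orthonormal hP]
  ext r
  simp [mul_comm]

theorem diagonal_mulVec_transpose_mulVec_of_orthonormal (hP : Pᵀ * P = 1)
    (hu : (P * diagonal lam * Pᵀ) *ᵥ u = t • u) :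
    diagonal lam *ᵥ (Pᵀ *ᵥ u) = t • (Pᵀ *ᵥ u) := by
  rw [← mulVec_smul, ← hu, mulVec_mulVec, mulVec_mulVec, ← Matrix.mul_assoc, ← Matrix.mul_assoc, hP,
    Matrix.one_mul]

theorem mulVec_transpose_mulVec_of_orthonormal (hP : Pᵀ * P = 1)
    (hu : (P * diagonal lam * Pᵀ) *ᵥ u = t • u) (ht : t ≠ 0) :
    P *ᵥ (Pᵀ *ᵥ u) = u := by
  have h := congrArg (P *ᵥ ·) (diagonal_mulVec_transpose_mulVec_of_orthonormal hP hu)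
  rw [mulVec_mulVec, mulVec_mulVec, hu, mulVec_smul] at h
  exact (smul_right_injective _ ht h).symm

theorem exists_eq_of_mulVec_eq_smul_of_orthonormal (hP : Pᵀ * P = 1)
    (hu : (P * diagonal lam * Pᵀ) *ᵥ u = t • u) (ht : t ≠ 0) (hu0 : u ≠ 0) : ∃ i, t = lam i := by
  have hy : Pᵀ *ᵥ u ≠ 0 := fun hy => hu0 <| by
    rw [← mulVec_transpose_mulVec_of_orthonormal hP hu ht, hy, mulVec_zero]
  obtain ⟨i, hi⟩ := Function.ne_iff.mp hy
  exact ⟨i, (eq_of_diagonal_mulVec_eq_smul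
    (diagonal_mulVec_transpose_mulVec_of_orthonormal hP hu) hi).symm⟩

theorem eigenspace_eq_span_col_of_orthonormal (hP : Pᵀ * P = 1) (hlam : Function.Injective lam)
    {i : n} (hi : lam i ≠ 0) :
    Module.End.eigenspace (toLin' (P * diagonal lam * Pᵀ)) (lam i) =
      Submodule.span ℝ {P.col i} := by
  refine le_antisymm (fun u hu => ?_) ?_
  · rw [Module.End.mem_eigenspace_iff, toLin'_apply] at hu
    have hy : Pᵀ *ᵥ u = (Pᵀ *ᵥ u) i • Pi.single i 1 := by
      funext j
      by_cases hji : j = i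
      · subst hji; simp
      · have hyj : (Pᵀ *ᵥ u) j = 0 := by
          by_contra hyj
          exact hji (hlam (eq_of_diagonal_mulVec_eq_smul
            (diagonal_mulVec_transpose_mulVec_of_orthonormal hP hu) hyj))
        simp [hyj, hji]
    rw [← mulVec_transpose_mulVec_of_orthonormal hP hu hi, hy, mulVec_smul, mulVec_single_one]
    exact Submodule.smul_mem _ _ (Submodule.mem_span_singleton_self _)
  · rw [Submodule.span_le, Set.singleton_subset_iff, SetLike.mem_coe,
      Module.End.mem_eigenspace_iff, toLin'_apply]
    exact mulVec_col_of_orthonormal hP lam i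

theorem finrank_eigenspace_eq_one_of_orthonormal (hP : Pᵀ * P = 1) (hlam : Function.Injective lam)
    {i : n} (hi : lam i ≠ 0) :
    Module.finrank ℝ (Module.End.eigenspace (toLin' (P * diagonal lam * Pᵀ)) (lam i)) = 1 := by
  rw [eigenspace_eq_span_col_of_orthonormal hP hlam hi]
  refine finrank_span_singleton fun h => ?_
  simpa [h] using dotProduct_col_self_of_orthonormal hP i

end OrthonormalColumns

theorem gmm_spectral_estimator_general
    (d k : ℕ) (w : Fin k → ℝ) (μ : Fin k → Fin d → ℝ) (σ2 : Fin k → ℝ)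
    (hw_pos : ∀ i, 0 < w i)
    (A : Matrix (Fin d) (Fin k) ℝ) (hA : A = Matrix.of fun r c => μ c r)
    (hrank : A.rank = k)
    (η : Fin d → ℝ)
    (hη_distinct : Function.Injective fun i => η ⬝ᵥ μ i)
    (hη_nonzero : ∀ i, η ⬝ᵥ μ i ≠ 0)
    (M1 : Fin d → ℝ) (hM1 : M1 = ∑ i, (w i * σ2 i) • μ i)
    (M2 : Matrix (Fin d) (Fin d) ℝ) (hM2 : M2 = ∑ i, w i • Matrix.vecMulVec (μ i) (μ i))
    (M3η : Matrix (Fin d) (Fin d) ℝ)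
    (hM3η : M3η = ∑ i, (w i * (η ⬝ᵥ μ i)) • Matrix.vecMulVec (μ i) (μ i))
    (MG : Matrix (Fin d) (Fin d) ℝ) (hMG : MG = pinvSqrt M2 * M3η * pinvSqrt M2) :
    -- `M_GMM(η)` is diagonalizable
    (∃ (C : Matrix (Fin d) (Fin d) ℝ) (D : Fin d → ℝ),
        IsUnit C.det ∧ MG = C * Matrix.diagonal D * C⁻¹) ∧
    ∃ (lam : Fin k → ℝ) (v : Fin k → Fin d → ℝ) (π : Equiv.Perm (Fin k)) (s : Fin k → ℝ),
      (∀ i, s i = 1 ∨ s i = -1) ∧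
      -- `(lam i, v i)` are non-zero eigenvalue / unit-norm eigenvector pairs
      (∀ i, lam i ≠ 0 ∧ v i ⬝ᵥ v i = 1 ∧ MG *ᵥ v i = lam i • v i) ∧
      -- every non-zero eigenvalue of `M_GMM(η)` is one of the `lam i`
      (∀ t : ℝ, t ≠ 0 → (∃ u : Fin d → ℝ, u ≠ 0 ∧ MG *ᵥ u = t • u) → ∃ i, t = lam i) ∧
      -- each has geometric multiplicity one
      (∀ i, Module.finrank ℝ (Module.End.eigenspace (Matrix.toLin' MG) (lam i)) = 1) ∧
      (∀ i, lam i = η ⬝ᵥ μ (π i)) ∧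
      (∀ i, psdSqrt M2 *ᵥ v i = (s i * Real.sqrt (w (π i))) • μ (π i)) ∧
      -- recovery of the parameters
      (∀ i, μ (π i) = (lam i / (η ⬝ᵥ (psdSqrt M2 *ᵥ v i))) • (psdSqrt M2 *ᵥ v i)) ∧
      (∀ i, σ2 i = (1 / w i) * (pinv A *ᵥ M1) i) ∧
      (∀ i, w i = (pinv A *ᵥ (∑ j, w j • μ j)) i) := by
  have hw : ∀ i, 0 ≤ w i := fun i => (hw_pos i).le
  have hAinj := mulVec_injective_of_rank_eq hrank
  obtain ⟨P, S, hP, hS, hPS⟩ := exists_orthonormal_mul_posDef _ <|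
    mulVec_injective_mul_diagonal hAinj fun i => (Real.sqrt_pos.mpr (hw_pos i)).ne'
  have hM2PS : M2 = P * S * (P * S)ᵀ := by
    simpa [hM2, hA, ← hPS] using sum_smul_vecMulVec_eq_conj_diagonal w hw μ 1
  have hMGP : MG = P * diagonal (fun i => η ⬝ᵥ μ i) * Pᵀ := by
    rw [hMG, hM3η, sum_smul_vecMulVec_eq_conj_diagonal w hw, ← hA, hPS, hM2PS,
      pinvSqrt_mul_conj_mul_pinvSqrt_of_polar hP hS]
  have hsqrt : ∀ i, psdSqrt M2 *ᵥ P.col i = √(w i) • μ i := fun i => by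
    rw [hM2PS, psdSqrt_mul_transpose_of_polar hP hS.posSemidef,
      conj_mulVec_col_of_orthonormal hP, ← hPS]
    ext r
    simp [hA, mul_comm]
  have hpinvA : ∀ c, pinv A *ᵥ ∑ i, c i • μ i = c := fun c => by
    rw [sum_smul_eq_mulVec, ← hA, mulVec_mulVec, pinv_mul_self_of_injective hAinj, one_mulVec]
  subst hMGP
  refine ⟨(isHermitian_mul_mul_conjTranspose P (isHermitian_diagonal _)).exists_diagonalization,
    fun i => η ⬝ᵥ μ i, P.col, Equiv.refl _, fun _ => 1, fun _ => Or.inl rfl,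
    fun i => ⟨hη_nonzero i, dotProduct_col_self_of_orthonormal hP i,
      mulVec_col_of_orthonormal hP _ i⟩,
    fun t ht ⟨u, hu0, hu⟩ => exists_eq_of_mulVec_eq_smul_of_orthonormal hP hu ht hu0,
    fun i => finrank_eigenspace_eq_one_of_orthonormal hP hη_distinct (hη_nonzero i),
    fun i => rfl, fun i => by simpa using hsqrt i, fun i => ?_, fun i => ?_, fun i => ?_⟩
  · have hcoef : (η ⬝ᵥ μ i) / (√(w i) * η ⬝ᵥ μ i) * √(w i) = 1 := by
      field_simp [hη_nonzero i, (Real.sqrt_pos.mpr (hw_pos i)).ne']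
    rw [Equiv.refl_apply, hsqrt, dotProduct_smul, smul_smul, smul_eq_mul, hcoef, one_smul]
  · rw [hM1, hpinvA]
    field_simp [(hw_pos i).ne']
  · rw [hpinvA]

/-- **Moment-based estimator (exact moments).**
Under the non-degeneracy condition, if `ηᵀμ_1, …, ηᵀμ_k` are distinct and non-zero, then
`M_GMM(η) := M₂^{†1/2} M₃(η) M₂^{†1/2}` is diagonalizable, has exactly `k` non-zero
eigenvalues each of geometric multiplicity one, and its non-zero eigenvalue / unit
eigenvector pairs `(λ_i, v_i)` satisfy, for some permutation `π` and signs `s_i ∈ {±1}`: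
`λ_i = ηᵀ μ_{π i}` and `M₂^{1/2} v_i = s_i √(w_{π i}) μ_{π i}`; consequently
`μ_{π i} = (λ_i / (ηᵀ M₂^{1/2} v_i)) M₂^{1/2} v_i`, `σ_i² = (1/w_i) e_iᵀ A^† M₁`, and
`w_i = e_iᵀ A^† E[x]`. -/
theorem gmm_spectral_estimator
    (d k : ℕ) (w : Fin k → ℝ) (μ : Fin k → Fin d → ℝ) (σ2 : Fin k → ℝ)
    (hσ2 : ∀ i, 0 ≤ σ2 i)
    (hw_pos : ∀ i, 0 < w i) (hw_sum : ∑ i, w i = 1)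
    (A : Matrix (Fin d) (Fin k) ℝ) (hA : A = Matrix.of fun r c => μ c r)
    (hrank : A.rank = k)
    (η : Fin d → ℝ)
    (hη_distinct : Function.Injective fun i => η ⬝ᵥ μ i)
    (hη_nonzero : ∀ i, η ⬝ᵥ μ i ≠ 0)
    (M1 : Fin d → ℝ) (hM1 : M1 = ∑ i, (w i * σ2 i) • μ i)
    (M2 : Matrix (Fin d) (Fin d) ℝ) (hM2 : M2 = ∑ i, w i • Matrix.vecMulVec (μ i) (μ i))
    (M3η : Matrix (Fin d) (Fin d) ℝ)
    (hM3η : M3η = ∑ i, (w i * (η ⬝ᵥ μ i)) • Matrix.vecMulVec (μ i) (μ i))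
    (MG : Matrix (Fin d) (Fin d) ℝ) (hMG : MG = pinvSqrt M2 * M3η * pinvSqrt M2) :
    -- `M_GMM(η)` is diagonalizable
    (∃ (C : Matrix (Fin d) (Fin d) ℝ) (D : Fin d → ℝ),
        IsUnit C.det ∧ MG = C * Matrix.diagonal D * C⁻¹) ∧
    ∃ (lam : Fin k → ℝ) (v : Fin k → Fin d → ℝ) (π : Equiv.Perm (Fin k)) (s : Fin k → ℝ),
      (∀ i, s i = 1 ∨ s i = -1) ∧
      -- `(lam i, v i)` are non-zero eigenvalue / unit-norm eigenvector pairs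
      (∀ i, lam i ≠ 0 ∧ v i ⬝ᵥ v i = 1 ∧ MG *ᵥ v i = lam i • v i) ∧
      -- every non-zero eigenvalue of `M_GMM(η)` is one of the `lam i`
      (∀ t : ℝ, t ≠ 0 → (∃ u : Fin d → ℝ, u ≠ 0 ∧ MG *ᵥ u = t • u) → ∃ i, t = lam i) ∧
      -- each has geometric multiplicity one
      (∀ i, Module.finrank ℝ (Module.End.eigenspace (Matrix.toLin' MG) (lam i)) = 1) ∧
      (∀ i, lam i = η ⬝ᵥ μ (π i)) ∧
      (∀ i, psdSqrt M2 *ᵥ v i = (s i * Real.sqrt (w (π i))) • μ (π i)) ∧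
      -- recovery of the parameters
      (∀ i, μ (π i) = (lam i / (η ⬝ᵥ (psdSqrt M2 *ᵥ v i))) • (psdSqrt M2 *ᵥ v i)) ∧
      (∀ i, σ2 i = (1 / w i) * (pinv A *ᵥ M1) i) ∧
      (∀ i, w i = (pinv A *ᵥ (∑ j, w j • μ j)) i) :=
  gmm_spectral_estimator_general d k w μ σ2 hw_pos A hA hrank η hη_distinct hη_nonzero M1 hM1 M2 hM2
    M3η hM3η MG hMG
end

section
/- Let M_2 ∈ ℝ^{d×d} be symmetric positive semidefinite of rank k with k-th largest singular value ς_k[M_2] > 0, and let M̂_2 ∈ ℝ^{d×d} be symmetric with Err := ‖M̂_2 − M_2‖₂/ς_k[M_2] ≤ 1/3. Let U, Û ∈ ℝ^{d×k} be matrices of orthonormal left singular vectors of M_2, M̂_2 corresponding to their k largest singular values, and let S, Ŝ be the corresponding diagonal matrices of singular values. Then: (1) (1 + Err)·S ⪰ Ûᵀ M̂_2 Û = Ŝ ⪰ (1 − Err)·S ≻ 0; (2) ς_k[Ûᵀ U] ≥ √(1 − (9/4)Err²) > 0; (3) ς_k[Ûᵀ M_2 Û] ≥ (1 − (9/4)Err²)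 ς_k[M_2] > 0; (4) ‖(I − ÛÛᵀ)UUᵀ‖₂ ≤ (3/2)Err. -/
open Matrix
open scoped BigOperators

/-- Spectral norm (ℓ² operator norm) of a real matrix. -/
noncomputable def spec {m n : ℕ} (M : Matrix (Fin m) (Fin n) ℝ) : ℝ :=
  ‖LinearMap.toContinuousLinearMap (Matrix.toEuclideanLin M)‖

/-- `t`-th largest entry (1-indexed) of a tuple of reals. -/
noncomputable def kthLargest {d : ℕ} (f : Fin d → ℝ) (t : ℕ) : ℝ :=
  if h : d - t < d then f (Tuple.sort f ⟨d - t, h⟩) else 0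

/-- `t`-th largest singular value (1-indexed) of a real matrix. -/
noncomputable def kthSV {m n : ℕ} (M : Matrix (Fin m) (Fin n) ℝ) (t : ℕ) : ℝ :=
  Real.sqrt (kthLargest (Matrix.isHermitian_conjTranspose_mul_self M).eigenvalues t)

/-!
Weyl's inequality `|ς_j[M̂₂] - ς_j[M₂]| ≤ ‖M̂₂ - M₂‖₂` controls all singular values. When the
top `k` singular values of a symmetric matrix dominate its negative part, its top `k` left
singular vectors are eigenvectors; so `M̂₂ Û = Û Ŝ`, which gives (1), and
`‖(I - ÛÛᵀ) M̂₂‖₂ ≤ ς_{k+1}[M̂₂] ≤ ‖M̂₂ - M₂‖₂`.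

For (4) let `Z = I - ÛÛᵀ` and `N = U S⁻¹ Uᵀ`, so that `UUᵀ = M₂ N`. Invariance of the range of
`Û` gives `Z M̂₂ Z = Z M̂₂`, hence `X := Z UUᵀ` satisfies `X = (Z M̂₂) X N - Z (M̂₂ - M₂) N` and
`‖X‖ ≤ Err ‖X‖ + Err`. In the other direction `(I - UUᵀ) M₂ = 0` gives
`(I - UUᵀ) ÛÛᵀ = (I - UUᵀ) (M̂₂ - M₂) Û Ŝ⁻¹ Ûᵀ`. Both bounds yield (2) and (3) through
`‖Vᵀ W x‖² = ‖x‖² - ‖(I - VVᵀ) W x‖²` for matrices `V`, `W` with orthonormal columns.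
-/

open scoped Matrix.Norms.L2Operator
open WithLp (toLp)

lemma spec_eq_l2_opNorm {m n : ℕ} (M : Matrix (Fin m) (Fin n) ℝ) : spec M = ‖M‖ := rfl

namespace Matrix

section L2OpNorm

variable {m n : Type*} [Fintype m] [Fintype n]

lemma norm_toLp_sq (x : n → ℝ) : ‖toLp 2 x‖ ^ 2 = x ⬝ᵥ x := by
  rw [EuclideanSpace.norm_sq_eq]
  simp [dotProduct, sq]

lemma norm_toLp_mulVec_le [DecidableEq n] (A : Matrix m n ℝ) (x : n → ℝ) :
    ‖toLp 2 (A *ᵥ x)‖ ≤ ‖A‖ * ‖toLp 2 x‖ :=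
  A.l2_opNorm_mulVec (toLp 2 x)

lemma dotProduct_mulVec_le_l2_opNorm_sq [DecidableEq n] (A : Matrix m n ℝ) (x : n → ℝ) :
    (A *ᵥ x) ⬝ᵥ (A *ᵥ x) ≤ ‖A‖ ^ 2 * (x ⬝ᵥ x) := by
  rw [← norm_toLp_sq, ← norm_toLp_sq, ← mul_pow]
  exact pow_le_pow_left₀ (norm_nonneg _) (norm_toLp_mulVec_le A x) 2

lemma l2_opNorm_le_of_forall [DecidableEq n] {A : Matrix m n ℝ} {c : ℝ} (hc : 0 ≤ c)
    (h : ∀ x, ‖toLp 2 (A *ᵥ x)‖ ≤ c * ‖toLp 2 x‖) : ‖A‖ ≤ c :=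
  ContinuousLinearMap.opNorm_le_bound _ hc fun y ↦ h y.ofLp

lemma dotProduct_mulVec_of_transpose_mul_self [DecidableEq n] {V : Matrix m n ℝ}
    (hV : Vᵀ * V = 1) (x : n → ℝ) : (V *ᵥ x) ⬝ᵥ (V *ᵥ x) = x ⬝ᵥ x := by
  rw [dotProduct_mulVec, ← vecMul_transpose, vecMul_vecMul, ← mulVec_transpose, hV,
    transpose_one, one_mulVec]

lemma norm_toLp_mulVec_of_transpose_mul_self [DecidableEq n] {V : Matrix m n ℝ}
    (hV : Vᵀ * V = 1) (x : n → ℝ) : ‖toLp 2 (V *ᵥ x)‖ = ‖toLp 2 x‖ := by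
  rw [← sq_eq_sq₀ (norm_nonneg _) (norm_nonneg _), norm_toLp_sq, norm_toLp_sq,
    dotProduct_mulVec_of_transpose_mul_self hV]

lemma l2_opNorm_le_one_of_transpose_mul_self [DecidableEq n] {V : Matrix m n ℝ}
    (hV : Vᵀ * V = 1) : ‖V‖ ≤ 1 :=
  l2_opNorm_le_of_forall zero_le_one fun x ↦ by
    rw [norm_toLp_mulVec_of_transpose_mul_self hV, one_mul]

lemma l2_opNorm_transpose [DecidableEq m] [DecidableEq n] (A : Matrix m n ℝ) :
    ‖Aᵀ‖ = ‖A‖ := by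
  rw [← conjTranspose_eq_transpose_of_trivial, l2_opNorm_conjTranspose]

lemma l2_opNorm_diagonal_le [DecidableEq n] {s : n → ℝ} {c : ℝ} (hc : 0 ≤ c)
    (h : ∀ i, |s i| ≤ c) : ‖diagonal s‖ ≤ c := by
  rw [l2_opNorm_diagonal, pi_norm_le_iff_of_nonneg hc]
  exact h

lemma abs_dotProduct_mulVec_le [DecidableEq n] (A : Matrix n n ℝ) (x : n → ℝ) :
    |x ⬝ᵥ (A *ᵥ x)| ≤ ‖A‖ * (x ⬝ᵥ x) := by
  have h := abs_real_inner_le_norm (toLp 2 x) (toLp 2 (A *ᵥ x))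
  rw [EuclideanSpace.inner_toLp_toLp, star_trivial, dotProduct_comm] at h
  calc |x ⬝ᵥ (A *ᵥ x)| ≤ ‖toLp 2 x‖ * (‖A‖ * ‖toLp 2 x‖) :=
        h.trans (mul_le_mul_of_nonneg_left (norm_toLp_mulVec_le A x) (norm_nonneg _))
    _ = ‖A‖ * (x ⬝ᵥ x) := by rw [← norm_toLp_sq]; ring

lemma norm_toLp_diagonal_mulVec_le [DecidableEq n] {s y : n → ℝ} {c : ℝ} (hc : 0 ≤ c)
    (h : ∀ i, y i ≠ 0 → |s i| ≤ c) : ‖toLp 2 (diagonal s *ᵥ y)‖ ≤ c * ‖toLp 2 y‖ := by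
  rw [← pow_le_pow_iff_left₀ (norm_nonneg _) (by positivity) two_ne_zero, mul_pow,
    norm_toLp_sq, norm_toLp_sq]
  simp only [dotProduct, mulVec_diagonal, Finset.mul_sum]
  refine Finset.sum_le_sum fun i _ ↦ ?_
  by_cases hy : y i = 0
  · simp [hy]
  · have := pow_le_pow_left₀ (abs_nonneg _) (h i hy) 2
    rw [sq_abs] at this
    nlinarith [mul_self_nonneg (y i)]

lemma le_norm_toLp_diagonal_mulVec [DecidableEq n] {s y : n → ℝ} {c : ℝ} (hc : 0 ≤ c)
    (h : ∀ i, y i ≠ 0 → c ≤ |s i|) : c * ‖toLp 2 y‖ ≤ ‖toLp 2 (diagonal s *ᵥ y)‖ := by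
  rw [← pow_le_pow_iff_left₀ (by positivity) (norm_nonneg _) two_ne_zero, mul_pow,
    norm_toLp_sq, norm_toLp_sq]
  simp only [dotProduct, mulVec_diagonal, Finset.mul_sum]
  refine Finset.sum_le_sum fun i _ ↦ ?_
  by_cases hy : y i = 0
  · simp [hy]
  · have := pow_le_pow_left₀ hc (h i hy) 2
    rw [sq_abs] at this
    nlinarith [mul_self_nonneg (y i)]

end L2OpNorm

section Projection

variable {m n k l : Type*}

lemma dotProduct_mulVec_self_eq [Fintype m] [Fintype n] (A : Matrix m n ℝ) (x : n → ℝ) :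
    (A *ᵥ x) ⬝ᵥ (A *ᵥ x) = x ⬝ᵥ ((Aᵀ * A) *ᵥ x) := by
  rw [← mulVec_mulVec, dotProduct_mulVec x, vecMul_transpose]

lemma dotProduct_transpose_mul_mul_mulVec [Fintype n] [Fintype k] (B : Matrix n k ℝ)
    (D : Matrix n n ℝ) (x : k → ℝ) :
    x ⬝ᵥ ((Bᵀ * D * B) *ᵥ x) = (B *ᵥ x) ⬝ᵥ (D *ᵥ (B *ᵥ x)) := by
  rw [Matrix.mul_assoc, ← mulVec_mulVec, dotProduct_mulVec, vecMul_transpose, mulVec_mulVec]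

lemma l2_opNorm_mul_mul_le [Fintype m] [Fintype n] [Fintype k] [Fintype l]
    [DecidableEq n] [DecidableEq k] [DecidableEq l]
    (A : Matrix m n ℝ) (B : Matrix n k ℝ) (C : Matrix k l ℝ) :
    ‖A * B * C‖ ≤ ‖A‖ * ‖B‖ * ‖C‖ :=
  (l2_opNorm_mul _ _).trans
    (mul_le_mul_of_nonneg_right (l2_opNorm_mul _ _) (norm_nonneg _))

lemma one_sub_mul_transpose_mul_self [Fintype n] [Fintype k] [DecidableEq n] [DecidableEq k]
    {V : Matrix n k ℝ} (hV : Vᵀ * V = 1) : (1 - V * Vᵀ) * V = 0 := by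
  rw [Matrix.sub_mul, Matrix.one_mul, Matrix.mul_assoc, hV, Matrix.mul_one, sub_self]

lemma transpose_one_sub_mul_transpose [Fintype k] [DecidableEq n] (V : Matrix n k ℝ) :
    (1 - V * Vᵀ)ᵀ = 1 - V * Vᵀ := by
  rw [transpose_sub, transpose_one, transpose_mul, transpose_transpose]

lemma one_sub_mul_transpose_mul_self_eq [Fintype n] [Fintype k] [DecidableEq n] [DecidableEq k]
    {V : Matrix n k ℝ} (hV : Vᵀ * V = 1) :
    (1 - V * Vᵀ) * (1 - V * Vᵀ) = 1 - V * Vᵀ := by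
  rw [Matrix.mul_sub, Matrix.mul_one, ← Matrix.mul_assoc, one_sub_mul_transpose_mul_self hV,
    Matrix.zero_mul, sub_zero]

lemma l2_opNorm_one_sub_mul_transpose_le_one [Fintype n] [Fintype k] [DecidableEq n]
    [DecidableEq k] {V : Matrix n k ℝ} (hV : Vᵀ * V = 1) : ‖1 - V * Vᵀ‖ ≤ 1 := by
  have h := l2_opNorm_conjTranspose_mul_self (1 - V * Vᵀ)
  rw [conjTranspose_eq_transpose_of_trivial, transpose_one_sub_mul_transpose,
    one_sub_mul_transpose_mul_self_eq hV] at h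
  nlinarith [norm_nonneg (1 - V * Vᵀ)]

/-- The sine of the largest principal angle between the column spaces of `V` and `W`, when both
have orthonormal columns. -/
noncomputable def sinTheta [Fintype n] [Fintype k] [Fintype l] [DecidableEq n] (V : Matrix n k ℝ)
    (W : Matrix n l ℝ) : ℝ :=
  ‖(1 - V * Vᵀ) * (W * Wᵀ)‖

lemma sinTheta_nonneg [Fintype n] [Fintype k] [Fintype l] [DecidableEq n] (V : Matrix n k ℝ)
    (W : Matrix n l ℝ) : 0 ≤ sinTheta V W :=
  norm_nonneg _

lemma one_sub_sinTheta_sq_mul_le [Fintype n] [Fintype k] [Fintype l] [DecidableEq n]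
    [DecidableEq k] [DecidableEq l] {V : Matrix n k ℝ} {W : Matrix n l ℝ} (hV : Vᵀ * V = 1)
    (hW : Wᵀ * W = 1) (x : l → ℝ) :
    (1 - sinTheta V W ^ 2) * (x ⬝ᵥ x) ≤ ((Vᵀ * W) *ᵥ x) ⬝ᵥ ((Vᵀ * W) *ᵥ x) := by
  rw [sinTheta]
  set Z := 1 - V * Vᵀ
  set y := W *ᵥ x
  have hy : y ⬝ᵥ y = x ⬝ᵥ x := dotProduct_mulVec_of_transpose_mul_self hW x
  have hpar : (Vᵀ *ᵥ y) ⬝ᵥ (Vᵀ *ᵥ y) = y ⬝ᵥ ((V * Vᵀ) *ᵥ y) := by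
    rw [dotProduct_mulVec_self_eq, transpose_transpose]
  have hperp : (Z *ᵥ y) ⬝ᵥ (Z *ᵥ y) = y ⬝ᵥ y - y ⬝ᵥ ((V * Vᵀ) *ᵥ y) := by
    rw [dotProduct_mulVec_self_eq, transpose_one_sub_mul_transpose,
      one_sub_mul_transpose_mul_self_eq hV, sub_mulVec, one_mulVec, dotProduct_sub]
  have hZy : Z *ᵥ y = (Z * (W * Wᵀ)) *ᵥ y := by
    simp only [y, mulVec_mulVec, Matrix.mul_assoc, hW, Matrix.mul_one]
  have hbound := dotProduct_mulVec_le_l2_opNorm_sq (Z * (W * Wᵀ)) y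
  rw [← hZy, hy] at hbound
  rw [← mulVec_mulVec, hpar]
  linarith

lemma mul_dotProduct_le_dotProduct_diagonal_mulVec [Fintype n] [DecidableEq n] {S : n → ℝ}
    {σ : ℝ} (hS : ∀ j, σ ≤ S j) (z : n → ℝ) :
    σ * (z ⬝ᵥ z) ≤ z ⬝ᵥ (diagonal S *ᵥ z) := by
  simp only [dotProduct, mulVec_diagonal, Finset.mul_sum]
  exact Finset.sum_le_sum fun j _ ↦ by nlinarith [hS j, mul_self_nonneg (z j)]

end Projection

section SinTheta

variable {n k l : Type*} [Fintype n] [Fintype k] [Fintype l] [DecidableEq n] [DecidableEq k]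
  [DecidableEq l]

lemma exists_mul_eq_mul_transpose {A : Matrix n n ℝ} {W : Matrix n k ℝ} (hW : Wᵀ * W = 1)
    {T : k → ℝ} {τ : ℝ} (hτ : 0 < τ) (hT : ∀ j, τ ≤ T j) (hAW : A * W = W * diagonal T) :
    ∃ N : Matrix n n ℝ, A * N = W * Wᵀ ∧ W * Wᵀ * N = N ∧ ‖N‖ ≤ τ⁻¹ := by
  have hTinv : (fun j ↦ T j * T⁻¹ j) = 1 :=
    funext fun j ↦ mul_inv_cancel₀ (hτ.trans_le (hT j)).ne'
  refine ⟨W * diagonal T⁻¹ * Wᵀ, ?_, ?_, ?_⟩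
  · rw [← Matrix.mul_assoc, ← Matrix.mul_assoc, hAW, Matrix.mul_assoc W, diagonal_mul_diagonal,
      hTinv, Pi.one_def, diagonal_one, Matrix.mul_one]
  · rw [Matrix.mul_assoc W Wᵀ, ← Matrix.mul_assoc Wᵀ, ← Matrix.mul_assoc Wᵀ, hW, Matrix.one_mul,
      ← Matrix.mul_assoc]
  · have hdiag : ‖diagonal T⁻¹‖ ≤ τ⁻¹ := by
      refine l2_opNorm_diagonal_le (inv_nonneg.mpr hτ.le) fun j ↦ ?_
      rw [Pi.inv_apply, abs_of_nonneg (inv_nonneg.mpr (hτ.le.trans (hT j)))]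
      exact inv_anti₀ hτ (hT j)
    calc ‖W * diagonal T⁻¹ * Wᵀ‖ ≤ ‖W‖ * ‖diagonal T⁻¹‖ * ‖Wᵀ‖ := l2_opNorm_mul_mul_le _ _ _
      _ ≤ 1 * τ⁻¹ * 1 := by
        rw [l2_opNorm_transpose]
        have hW1 := l2_opNorm_le_one_of_transpose_mul_self hW
        gcongr
      _ = τ⁻¹ := by ring

lemma one_sub_mul_transpose_mul_mul_one_sub {A : Matrix n n ℝ} {V : Matrix n k ℝ}
    (hV : Vᵀ * V = 1) {D : Matrix k k ℝ} (hAV : A * V = V * D) :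
    (1 - V * Vᵀ) * A * (1 - V * Vᵀ) = (1 - V * Vᵀ) * A := by
  rw [Matrix.mul_sub _ 1, Matrix.mul_one, ← Matrix.mul_assoc _ V, Matrix.mul_assoc _ A V, hAV,
    ← Matrix.mul_assoc, one_sub_mul_transpose_mul_self hV, Matrix.zero_mul, Matrix.zero_mul,
    sub_zero]

lemma sinTheta_le_of_residual {M M' : Matrix n n ℝ} {U : Matrix n k ℝ} {U' : Matrix n l ℝ}
    (hU : Uᵀ * U = 1) (hU' : U'ᵀ * U' = 1) {S : k → ℝ} {S' : l → ℝ} {σ ε : ℝ} (hσ : 0 < σ)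
    (hS : ∀ j, σ ≤ S j) (hMU : M * U = U * diagonal S) (hM'U' : M' * U' = U' * diagonal S')
    (hres : ‖(1 - U' * U'ᵀ) * M'‖ ≤ ε * σ) (hE : ‖M' - M‖ ≤ ε * σ) :
    (1 - ε) * sinTheta U' U ≤ ε := by
  obtain ⟨N, hMN, hPN, hN⟩ := exists_mul_eq_mul_transpose hU hσ hS hMU
  have hεσ : 0 ≤ ε * σ := (norm_nonneg _).trans hE
  have hZ1 := l2_opNorm_one_sub_mul_transpose_le_one hU'
  have hZM'Z := one_sub_mul_transpose_mul_mul_one_sub hU' hM'U'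
  rw [sinTheta]
  generalize 1 - U' * U'ᵀ = Z at hZ1 hZM'Z hres ⊢
  have hX : Z * (U * Uᵀ) = (Z * M') * (Z * (U * Uᵀ) * N) - Z * (M' - M) * N := by
    rw [Matrix.mul_assoc Z _ N, hPN, ← Matrix.mul_assoc (Z * M') Z N, hZM'Z,
      Matrix.mul_sub Z M' M, Matrix.sub_mul, sub_sub_cancel, Matrix.mul_assoc, hMN]
  generalize Z * (U * Uᵀ) = X at hX ⊢
  have hX1 : ‖(Z * M') * (X * N)‖ ≤ ε * ‖X‖ :=
    calc ‖(Z * M') * (X * N)‖ ≤ ‖Z * M'‖ * (‖X‖ * ‖N‖) :=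
          (l2_opNorm_mul _ _).trans
            (mul_le_mul_of_nonneg_left (l2_opNorm_mul _ _) (norm_nonneg _))
      _ ≤ (ε * σ) * (‖X‖ * σ⁻¹) := by gcongr
      _ = ε * ‖X‖ := by field_simp
  have hX2 : ‖Z * (M' - M) * N‖ ≤ ε :=
    calc ‖Z * (M' - M) * N‖ ≤ ‖Z‖ * ‖M' - M‖ * ‖N‖ := l2_opNorm_mul_mul_le _ _ _
      _ ≤ 1 * (ε * σ) * σ⁻¹ := by gcongr
      _ = ε := by field_simp
  have hXle : ‖X‖ ≤ ‖(Z * M') * (X * N)‖ + ‖Z * (M' - M) * N‖ := by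
    conv_lhs => rw [hX]
    exact norm_sub_le _ _
  linarith

lemma mul_sinTheta_le_of_mul_eq_zero {M M' : Matrix n n ℝ} {U : Matrix n k ℝ}
    {U' : Matrix n l ℝ} (hU : Uᵀ * U = 1) (hU' : U'ᵀ * U' = 1) {S' : l → ℝ} {τ : ℝ}
    (hτ : 0 < τ) (hS' : ∀ j, τ ≤ S' j) (hM'U' : M' * U' = U' * diagonal S')
    (hM : (1 - U * Uᵀ) * M = 0) :
    τ * sinTheta U U' ≤ ‖M' - M‖ := by
  obtain ⟨N, hMN, -, hN⟩ := exists_mul_eq_mul_transpose hU' hτ hS' hM'U'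
  have hY : (1 - U * Uᵀ) * (U' * U'ᵀ) = (1 - U * Uᵀ) * (M' - M) * N := by
    rw [Matrix.mul_sub, hM, sub_zero, ← hMN, Matrix.mul_assoc]
  have hbound : sinTheta U U' ≤ 1 * ‖M' - M‖ * τ⁻¹ := by
    rw [sinTheta, hY]
    refine (l2_opNorm_mul_mul_le _ _ _).trans ?_
    gcongr
    exact l2_opNorm_one_sub_mul_transpose_le_one hU
  rw [one_mul, ← div_eq_mul_inv, le_div_iff₀ hτ] at hbound
  linarith

end SinTheta

end Matrix

lemma Matrix.IsHermitian.le_eigenvalues_of_forall {n : Type*} [Fintype n] [DecidableEq n]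
    {H : Matrix n n ℝ} (hH : H.IsHermitian) {c : ℝ}
    (h : ∀ x, c * (x ⬝ᵥ x) ≤ x ⬝ᵥ (H *ᵥ x)) (i : n) : c ≤ hH.eigenvalues i := by
  set v := hH.eigenvectorBasis i
  have hv : v.ofLp ⬝ᵥ v.ofLp = 1 := by
    rw [← norm_toLp_sq, WithLp.toLp_ofLp, hH.eigenvectorBasis.orthonormal.1 i, one_pow]
  simpa [hH.eigenvalues_eq, hv] using h v.ofLp

lemma kthSV_nonneg {m n : ℕ} (M : Matrix (Fin m) (Fin n) ℝ) (t : ℕ) : 0 ≤ kthSV M t :=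
  Real.sqrt_nonneg _

lemma kthSV_antitone {m n : ℕ} (M : Matrix (Fin m) (Fin n) ℝ) {t t' : ℕ} (ht : 1 ≤ t)
    (htt' : t ≤ t') (hn : 0 < n) : kthSV M t' ≤ kthSV M t := by
  unfold kthSV kthLargest
  rw [dif_pos (by omega), dif_pos (by omega)]
  exact Real.sqrt_le_sqrt (Tuple.monotone_sort (isHermitian_conjTranspose_mul_self M).eigenvalues
    (show (⟨n - t', by omega⟩ : Fin n) ≤ ⟨n - t, by omega⟩ from Fin.mk_le_mk.mpr (by omega)))

/-- `kthSV M k` of a matrix with `k` columns is its smallest singular value. -/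
lemma sqrt_le_kthSV_of_forall {m k : ℕ} (hk : 0 < k) (M : Matrix (Fin m) (Fin k) ℝ) {c : ℝ}
    (h : ∀ x, c * (x ⬝ᵥ x) ≤ (M *ᵥ x) ⬝ᵥ (M *ᵥ x)) : √c ≤ kthSV M k := by
  unfold kthSV kthLargest
  rw [dif_pos (by omega)]
  refine Real.sqrt_le_sqrt (IsHermitian.le_eigenvalues_of_forall _ (fun x ↦ ?_) _)
  rw [conjTranspose_eq_transpose_of_trivial, ← dotProduct_mulVec_self_eq]
  exact h x

lemma le_kthSV_of_forall {k : ℕ} (hk : 0 < k) (M : Matrix (Fin k) (Fin k) ℝ) {c : ℝ}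
    (hc : 0 ≤ c) (h : ∀ x, c * (x ⬝ᵥ x) ≤ x ⬝ᵥ (M *ᵥ x)) : c ≤ kthSV M k := by
  rw [← Real.sqrt_sq hc]
  refine sqrt_le_kthSV_of_forall hk M fun x ↦ ?_
  have hcs := real_inner_le_norm (toLp 2 x) (toLp 2 (M *ᵥ x))
  rw [EuclideanSpace.inner_toLp_toLp, star_trivial, dotProduct_comm] at hcs
  have hx := h x
  rw [← norm_toLp_sq] at hx ⊢
  rw [← norm_toLp_sq, ← mul_pow]
  have ha := norm_nonneg (toLp 2 x)
  have hb := norm_nonneg (toLp 2 (M *ᵥ x))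
  generalize ‖toLp 2 x‖ = a at *
  generalize ‖toLp 2 (M *ᵥ x)‖ = b at *
  have hcab : c * a ≤ b := by
    rcases ha.eq_or_lt with rfl | ha
    · simpa using hb
    · nlinarith
  exact pow_le_pow_left₀ (mul_nonneg hc ha) hcab 2

lemma sqrt_one_sub_sq_le_kthSV_of_sinTheta_le {d k : ℕ} (hk : 0 < k)
    {V W : Matrix (Fin d) (Fin k) ℝ} (hV : Vᵀ * V = 1) (hW : Wᵀ * W = 1) {δ : ℝ}
    (hδ : sinTheta V W ≤ δ) : √(1 - δ ^ 2) ≤ kthSV (Vᵀ * W) k := by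
  refine sqrt_le_kthSV_of_forall hk _ fun x ↦ le_trans ?_ (one_sub_sinTheta_sq_mul_le hV hW x)
  have hsin := sinTheta_nonneg V W
  exact mul_le_mul_of_nonneg_right (by nlinarith) (by simpa using dotProduct_star_self_nonneg x)

lemma mul_le_kthSV_of_sinTheta_le {d k : ℕ} (hk : 0 < k) {U W : Matrix (Fin d) (Fin k) ℝ}
    (hU : Uᵀ * U = 1) (hW : Wᵀ * W = 1) {M : Matrix (Fin d) (Fin d) ℝ} {S : Fin k → ℝ}
    (hM : M = U * diagonal S * Uᵀ) {σ δ : ℝ} (hσ : 0 ≤ σ) (hS : ∀ j, σ ≤ S j) (hδ1 : δ ≤ 1)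
    (hδ : sinTheta U W ≤ δ) : (1 - δ ^ 2) * σ ≤ kthSV (Wᵀ * M * W) k := by
  have hsin := sinTheta_nonneg U W
  refine le_kthSV_of_forall hk _ (mul_nonneg (by nlinarith) hσ) fun x ↦ ?_
  have hconj : Wᵀ * M * W = (Uᵀ * W)ᵀ * diagonal S * (Uᵀ * W) := by
    simp only [hM, transpose_mul, transpose_transpose, Matrix.mul_assoc]
  rw [hconj, dotProduct_transpose_mul_mul_mulVec]
  have hx : 0 ≤ x ⬝ᵥ x := by simpa using dotProduct_star_self_nonneg x
  calc (1 - δ ^ 2) * σ * (x ⬝ᵥ x) ≤ σ * ((1 - sinTheta U W ^ 2) * (x ⬝ᵥ x)) := by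
        rw [mul_comm _ σ, mul_assoc]
        exact mul_le_mul_of_nonneg_left
          (mul_le_mul_of_nonneg_right (by nlinarith) hx) hσ
    _ ≤ σ * (((Uᵀ * W) *ᵥ x) ⬝ᵥ ((Uᵀ * W) *ᵥ x)) :=
        mul_le_mul_of_nonneg_left (one_sub_sinTheta_sq_mul_le hU hW x) hσ
    _ ≤ _ := mul_dotProduct_le_dotProduct_diagonal_mulVec hS _

namespace Matrix

lemma exists_ne_zero_eq_zero_of_lt_of_gt {d : ℕ} (R : Matrix (Fin d) (Fin d) ℝ) (j : Fin d) :
    ∃ y ≠ 0, (∀ i, i < j → y i = 0) ∧ ∀ i, j < i → (R *ᵥ y) i = 0 := by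
  let C : Matrix (Fin d) (Fin d) ℝ := of fun i l ↦
    if i < j then (1 : Matrix (Fin d) (Fin d) ℝ) i l else if j < i then R i l else 0
  have hC : C.det = 0 := det_eq_zero_of_row_eq_zero j fun l ↦ by simp [C]
  obtain ⟨y, hy0, hCy⟩ := exists_mulVec_eq_zero_iff.mpr hC
  refine ⟨y, hy0, fun i hi ↦ ?_, fun i hi ↦ ?_⟩
  · simpa [C, hi, mulVec, dotProduct, one_apply] using congrFun hCy i
  · simpa [C, hi, hi.not_gt, mulVec, dotProduct] using congrFun hCy i

structure IsSVD {d : ℕ} (A P Q : Matrix (Fin d) (Fin d) ℝ) (s : Fin d → ℝ) : Prop where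
  transpose_mul_left : Pᵀ * P = 1
  transpose_mul_right : Qᵀ * Q = 1
  antitone : Antitone s
  nonneg : ∀ i, 0 ≤ s i
  eq : A = P * diagonal s * Qᵀ

namespace IsSVD

variable {d : ℕ} {A P Q : Matrix (Fin d) (Fin d) ℝ} {s : Fin d → ℝ}

lemma of_kthSV (hP : Pᵀ * P = 1) (hQ : Qᵀ * Q = 1) (hs : ∀ j : Fin d, s j = kthSV A (j + 1))
    (hA : A = P * diagonal s * Qᵀ) : IsSVD A P Q s where
  transpose_mul_left := hP
  transpose_mul_right := hQ
  antitone i j hij := by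
    rw [hs, hs]
    exact kthSV_antitone A (by omega) (by simpa using hij) i.pos
  nonneg i := hs i ▸ kthSV_nonneg A _
  eq := hA

lemma mul_transpose_left (h : IsSVD A P Q s) : P * Pᵀ = 1 :=
  mul_eq_one_comm.mp h.transpose_mul_left

lemma mul_transpose_right (h : IsSVD A P Q s) : Q * Qᵀ = 1 :=
  mul_eq_one_comm.mp h.transpose_mul_right

lemma symm (h : IsSVD A P Q s) (hA : Aᵀ = A) : IsSVD A Q P s where
  transpose_mul_left := h.transpose_mul_right
  transpose_mul_right := h.transpose_mul_left
  antitone := h.antitone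
  nonneg := h.nonneg
  eq := by
    rw [← hA, h.eq, transpose_mul, transpose_mul, transpose_transpose, diagonal_transpose,
      Matrix.mul_assoc]

lemma mulVec_col (h : IsSVD A P Q s) (j : Fin d) : A *ᵥ Q.col j = s j • P.col j := by
  rw [← mulVec_single_one, h.eq, mulVec_mulVec, Matrix.mul_assoc _ Qᵀ, h.transpose_mul_right,
    Matrix.mul_one, ← mulVec_mulVec, diagonal_mulVec_single, mul_one]
  ext i
  simp [mulVec_single, mul_comm]

lemma le_add_l2_opNorm_sub {B PB QB : Matrix (Fin d) (Fin d) ℝ} {t : Fin d → ℝ}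
    (hA : IsSVD A P Q s) (hB : IsSVD B PB QB t) (j : Fin d) : t j ≤ s j + ‖B - A‖ := by
  obtain ⟨y, hy0, hlow, hhigh⟩ := exists_ne_zero_eq_zero_of_lt_of_gt (QBᵀ * Q) j
  have hQy : ‖toLp 2 (Q *ᵥ y)‖ = ‖toLp 2 y‖ :=
    norm_toLp_mulVec_of_transpose_mul_self hA.transpose_mul_right y
  have hpos : 0 < ‖toLp 2 y‖ := norm_pos_iff.mpr fun h ↦ hy0 (by simpa using h)
  have hAy : ‖toLp 2 (A *ᵥ (Q *ᵥ y))‖ ≤ s j * ‖toLp 2 y‖ := by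
    rw [hA.eq, mulVec_mulVec, Matrix.mul_assoc _ Qᵀ, hA.transpose_mul_right, Matrix.mul_one,
      ← mulVec_mulVec, norm_toLp_mulVec_of_transpose_mul_self hA.transpose_mul_left]
    refine norm_toLp_diagonal_mulVec_le (hA.nonneg j) fun i hi ↦ ?_
    rw [abs_of_nonneg (hA.nonneg i)]
    exact hA.antitone (not_lt.mp fun hij ↦ hi (hlow i hij))
  have hBy : t j * ‖toLp 2 y‖ ≤ ‖toLp 2 (B *ᵥ (Q *ᵥ y))‖ := by
    have hQBt : QBᵀᵀ * QBᵀ = 1 := by rw [transpose_transpose, hB.mul_transpose_right]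
    have hz : ‖toLp 2 ((QBᵀ * Q) *ᵥ y)‖ = ‖toLp 2 y‖ := by
      rw [← mulVec_mulVec, norm_toLp_mulVec_of_transpose_mul_self hQBt, hQy]
    rw [hB.eq, mulVec_mulVec, Matrix.mul_assoc _ QBᵀ, ← mulVec_mulVec, ← mulVec_mulVec,
      norm_toLp_mulVec_of_transpose_mul_self hB.transpose_mul_left, ← hz]
    refine le_norm_toLp_diagonal_mulVec (hB.nonneg j) fun i hi ↦ ?_
    rw [abs_of_nonneg (hB.nonneg i)]
    exact hB.antitone (not_lt.mp fun hij ↦ hi (hhigh i hij))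
  have htri : ‖toLp 2 (B *ᵥ (Q *ᵥ y))‖ ≤ ‖B - A‖ * ‖toLp 2 y‖ + s j * ‖toLp 2 y‖ := by
    have hsplit : B *ᵥ (Q *ᵥ y) = (B - A) *ᵥ (Q *ᵥ y) + A *ᵥ (Q *ᵥ y) := by
      rw [sub_mulVec, sub_add_cancel]
    rw [hsplit, WithLp.toLp_add, ← hQy]
    rw [← hQy] at hAy
    exact (norm_add_le _ _).trans (add_le_add (norm_toLp_mulVec_le _ _) hAy)
  have := hBy.trans htri
  nlinarith

lemma abs_sub_le_l2_opNorm_sub {B PB QB : Matrix (Fin d) (Fin d) ℝ} {t : Fin d → ℝ}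
    (hA : IsSVD A P Q s) (hB : IsSVD B PB QB t) (j : Fin d) : |t j - s j| ≤ ‖B - A‖ := by
  have h₁ := hA.le_add_l2_opNorm_sub hB j
  have h₂ := hB.le_add_l2_opNorm_sub hA j
  rw [← norm_neg, neg_sub] at h₂
  exact abs_sub_le_iff.mpr ⟨by linarith, by linarith⟩

lemma eq_zero_of_rank_le (h : IsSVD A P Q s) {k : ℕ} (hrank : A.rank ≤ k) {i : Fin d}
    (hi : k ≤ i) : s i = 0 := by
  classical
  have hrank' : A.rank = (diagonal s).rank := by
    rw [h.eq, Matrix.mul_assoc,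
      rank_mul_eq_right_of_isUnit_det _ _ (isUnit_det_of_left_inverse h.transpose_mul_left),
      rank_mul_eq_left_of_isUnit_det _ _ (isUnit_det_of_left_inverse h.mul_transpose_right)]
  by_contra hs
  have hsupp : Finset.Iic i ⊆ Finset.univ.filter fun a ↦ s a ≠ 0 := fun a ha ↦ by
    have hai : a ≤ i := Finset.mem_Iic.mp ha
    have := (h.nonneg i).lt_of_ne' hs
    simpa using (this.trans_le (h.antitone hai)).ne'
  have hcard := Finset.card_le_card hsupp
  rw [Fin.card_Iic, ← Fintype.card_subtype, ← rank_diagonal, ← hrank'] at hcard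
  omega

end IsSVD

lemma submatrix_transpose_mul_self {m n k : Type*} [Fintype m] [DecidableEq n] [DecidableEq k]
    {P : Matrix m n ℝ} (hP : Pᵀ * P = 1) {e : k → n} (he : Function.Injective e) :
    (P.submatrix id e)ᵀ * P.submatrix id e = 1 := by
  rw [transpose_submatrix, ← submatrix_mul _ _ _ _ _ Function.bijective_id, hP,
    submatrix_one _ he]

section FirstColumns

variable {d k : ℕ} (hdk : k ≤ d)

lemma submatrix_castLE_mul_transpose (P : Matrix (Fin d) (Fin d) ℝ) :
    P.submatrix id (Fin.castLE hdk) * (P.submatrix id (Fin.castLE hdk))ᵀ =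
      P * diagonal (fun i : Fin d ↦ if (i : ℕ) < k then 1 else 0) * Pᵀ := by
  ext a b
  rw [mul_apply, mul_apply]
  simp only [mul_diagonal, transpose_apply, submatrix_apply, id]
  refine Fintype.sum_of_injective _ (Fin.castLE_injective hdk) _ _ (fun i hi ↦ ?_) fun j ↦ ?_
  · rw [if_neg fun hik ↦ hi ⟨⟨i, hik⟩, rfl⟩, mul_zero, zero_mul]
  · rw [Fin.val_castLE, if_pos j.isLt, mul_one]

lemma one_sub_submatrix_castLE_mul_transpose {P : Matrix (Fin d) (Fin d) ℝ} (hP : P * Pᵀ = 1) :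
    1 - P.submatrix id (Fin.castLE hdk) * (P.submatrix id (Fin.castLE hdk))ᵀ =
      P * diagonal (fun i : Fin d ↦ if (i : ℕ) < k then 0 else 1) * Pᵀ := by
  calc _ = P * 1 * Pᵀ - P * diagonal (fun i : Fin d ↦ if (i : ℕ) < k then 1 else 0) * Pᵀ := by
        rw [Matrix.mul_one, hP, submatrix_castLE_mul_transpose]
    _ = _ := by
        rw [← Matrix.sub_mul, ← Matrix.mul_sub, ← diagonal_one, diagonal_sub]
        congr
        funext i
        split_ifs <;> norm_num

namespace IsSVD

variable {A P Q : Matrix (Fin d) (Fin d) ℝ} {s : Fin d → ℝ}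

lemma col_eq (h : IsSVD A P Q s) (hA : Aᵀ = A) {c : ℝ}
    (hquad : ∀ x, -c * (x ⬝ᵥ x) ≤ x ⬝ᵥ (A *ᵥ x)) {j : Fin d} (hj : c < s j) :
    Q.col j = P.col j := by
  have hAu : A *ᵥ (P.col j - Q.col j) = -s j • (P.col j - Q.col j) := by
    rw [mulVec_sub, (h.symm hA).mulVec_col, h.mulVec_col]
    module
  have hu := hquad (P.col j - Q.col j)
  rw [hAu, dotProduct_smul, smul_eq_mul] at hu
  have hnn : 0 ≤ (P.col j - Q.col j) ⬝ᵥ (P.col j - Q.col j) := by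
    simpa using dotProduct_star_self_nonneg (P.col j - Q.col j)
  have huu : (P.col j - Q.col j) ⬝ᵥ (P.col j - Q.col j) = 0 := by nlinarith
  exact (sub_eq_zero.mp (dotProduct_self_eq_zero.mp huu)).symm

lemma mul_submatrix_castLE (h : IsSVD A P Q s) (hA : Aᵀ = A) {c : ℝ}
    (hquad : ∀ x, -c * (x ⬝ᵥ x) ≤ x ⬝ᵥ (A *ᵥ x)) (hs : ∀ j : Fin k, c < s (Fin.castLE hdk j)) :
    A * P.submatrix id (Fin.castLE hdk) =
      P.submatrix id (Fin.castLE hdk) * diagonal (s ∘ Fin.castLE hdk) := by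
  ext i j
  have hcol := h.mulVec_col (Fin.castLE hdk j)
  rw [h.col_eq hA hquad (hs j)] at hcol
  rw [mul_diagonal, mul_apply]
  simpa [mulVec, dotProduct, mul_comm] using congrFun hcol i

lemma l2_opNorm_one_sub_submatrix_castLE_mul_le (h : IsSVD A P Q s) (hA : Aᵀ = A) {c : ℝ}
    (hc : 0 ≤ c) (hs : ∀ i : Fin d, k ≤ (i : ℕ) → s i ≤ c) :
    ‖(1 - P.submatrix id (Fin.castLE hdk) * (P.submatrix id (Fin.castLE hdk))ᵀ) * A‖ ≤ c := by
  rw [← l2_opNorm_transpose, transpose_mul, transpose_one_sub_mul_transpose, hA,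
    one_sub_submatrix_castLE_mul_transpose hdk h.mul_transpose_left, (h.symm hA).eq]
  have hdiag : ‖diagonal fun i : Fin d ↦ s i * if (i : ℕ) < k then 0 else 1‖ ≤ c := by
    refine l2_opNorm_diagonal_le hc fun i ↦ ?_
    split_ifs with hi
    · simpa using hc
    · rw [mul_one, abs_of_nonneg (h.nonneg i)]
      exact hs i (not_lt.mp hi)
  have hQ := l2_opNorm_le_one_of_transpose_mul_self h.transpose_mul_right
  have hPt : ‖Pᵀ‖ ≤ 1 := by
    rw [l2_opNorm_transpose]
    exact l2_opNorm_le_one_of_transpose_mul_self h.transpose_mul_left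
  calc _ = ‖Q * diagonal (fun i : Fin d ↦ s i * if (i : ℕ) < k then 0 else 1) * Pᵀ‖ := by
        simp only [Matrix.mul_assoc]
        rw [← Matrix.mul_assoc Pᵀ P, h.transpose_mul_left, Matrix.one_mul,
          ← Matrix.mul_assoc (diagonal s), diagonal_mul_diagonal]
    _ ≤ ‖Q‖ * ‖diagonal fun i : Fin d ↦ s i * if (i : ℕ) < k then 0 else 1‖ * ‖Pᵀ‖ :=
        l2_opNorm_mul_mul_le _ _ _
    _ ≤ 1 * c * 1 := by gcongr
    _ = c := by ring

end IsSVD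

end FirstColumns

lemma diagonal_bounds_of_abs_sub_le {k : Type*} [DecidableEq k] {S T : k → ℝ} {σ ε : ℝ}
    (hσ : 0 < σ) (hε : ε < 1) (hS : ∀ j, σ ≤ S j) (hT : ∀ j, |T j - S j| ≤ ε * σ) :
    ((1 + ε) • diagonal S - diagonal T).PosSemidef ∧
      (diagonal T - (1 - ε) • diagonal S).PosSemidef ∧ ((1 - ε) • diagonal S).PosDef := by
  simp only [← diagonal_smul, diagonal_sub, posSemidef_diagonal_iff, posDef_diagonal_iff,
    Pi.smul_apply, smul_eq_mul]
  refine ⟨fun j ↦ ?_, fun j ↦ ?_, fun j ↦ ?_⟩ <;>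
    have := abs_le.mp (hT j) <;> have := hS j <;> nlinarith

section Symmetric

variable {n k : Type*} [Fintype n] [Fintype k] [DecidableEq n] [DecidableEq k]

lemma PosSemidef.neg_mul_le_dotProduct_mulVec {M : Matrix n n ℝ} (hM : M.PosSemidef)
    (M' : Matrix n n ℝ) (x : n → ℝ) : -‖M' - M‖ * (x ⬝ᵥ x) ≤ x ⬝ᵥ (M' *ᵥ x) := by
  have hMx : 0 ≤ x ⬝ᵥ (M *ᵥ x) := by simpa using hM.dotProduct_mulVec_nonneg x
  have hEx := neg_abs_le (x ⬝ᵥ ((M' - M) *ᵥ x))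
  have hE := abs_dotProduct_mulVec_le (M' - M) x
  rw [sub_mulVec, dotProduct_sub] at hEx hE
  linarith

lemma eq_mul_diagonal_mul_transpose {M : Matrix n n ℝ} (hM : Mᵀ = M) {U : Matrix n k ℝ}
    {S : k → ℝ} (hMU : M * U = U * diagonal S) (hres : (1 - U * Uᵀ) * M = 0) :
    M = U * diagonal S * Uᵀ := by
  have hUM : Uᵀ * M = diagonal S * Uᵀ := by
    rw [← hM, ← transpose_mul, hMU, transpose_mul, diagonal_transpose]
  rw [Matrix.sub_mul, Matrix.one_mul, sub_eq_zero, Matrix.mul_assoc, hUM] at hres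
  rw [hres, Matrix.mul_assoc]

end Symmetric

end Matrix

theorem top_eigenspace_perturbation {d k : ℕ} (hk : 0 < k) {M M' : Matrix (Fin d) (Fin d) ℝ}
    {U U' : Matrix (Fin d) (Fin k) ℝ} {S S' : Fin k → ℝ} {σ ε : ℝ} (hσ : 0 < σ) (hε : ε ≤ 1 / 3)
    (hU : Uᵀ * U = 1) (hU' : U'ᵀ * U' = 1) (hM : Mᵀ = M) (hS : ∀ j, σ ≤ S j)
    (hMU : M * U = U * diagonal S) (hres : (1 - U * Uᵀ) * M = 0)
    (hM'U' : M' * U' = U' * diagonal S') (hres' : ‖(1 - U' * U'ᵀ) * M'‖ ≤ ε * σ)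
    (hS' : ∀ j, |S' j - S j| ≤ ε * σ) (hE : ‖M' - M‖ ≤ ε * σ) :
    (((1 + ε) • diagonal S - U'ᵀ * M' * U').PosSemidef ∧ U'ᵀ * M' * U' = diagonal S' ∧
      (diagonal S' - (1 - ε) • diagonal S).PosSemidef ∧ ((1 - ε) • diagonal S).PosDef) ∧
    (√(1 - 9 / 4 * ε ^ 2) ≤ kthSV (U'ᵀ * U) k ∧ 0 < kthSV (U'ᵀ * U) k) ∧
    ((1 - 9 / 4 * ε ^ 2) * σ ≤ kthSV (U'ᵀ * M * U') k ∧ 0 < kthSV (U'ᵀ * M * U') k) ∧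
    sinTheta U' U ≤ 3 / 2 * ε := by
  have hε0 : 0 ≤ ε := nonneg_of_mul_nonneg_left ((norm_nonneg _).trans hE) hσ
  have hS'σ : ∀ j, 2 / 3 * σ ≤ S' j := fun j ↦ by
    have := abs_le.mp (hS' j); have := hS j; nlinarith
  have h4 : sinTheta U' U ≤ 3 / 2 * ε := by
    have := sinTheta_le_of_residual hU hU' hσ hS hMU hM'U' hres' hE
    nlinarith [sinTheta_nonneg U' U]
  have h3 : sinTheta U U' ≤ 3 / 2 * ε := by
    have := mul_sinTheta_le_of_mul_eq_zero hU hU' (by positivity) hS'σ hM'U' hres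
    nlinarith [sinTheta_nonneg U U']
  have h2 := sqrt_one_sub_sq_le_kthSV_of_sinTheta_le hk hU' hU h4
  have h3' := mul_le_kthSV_of_sinTheta_le hk hU hU' (eq_mul_diagonal_mul_transpose hM hMU hres)
    hσ.le hS (by linarith) h3
  rw [show (3 / 2 * ε) ^ 2 = 9 / 4 * ε ^ 2 by ring] at h2 h3'
  have hpos : 0 < 1 - 9 / 4 * ε ^ 2 := by nlinarith
  have hdiag : U'ᵀ * M' * U' = diagonal S' := by
    rw [Matrix.mul_assoc, hM'U', ← Matrix.mul_assoc, hU', Matrix.one_mul]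
  obtain ⟨h1a, h1b, h1c⟩ := diagonal_bounds_of_abs_sub_le hσ (by linarith) hS hS'
  rw [hdiag]
  exact ⟨⟨h1a, rfl, h1b, h1c⟩, ⟨h2, (Real.sqrt_pos.mpr hpos).trans_le h2⟩,
    ⟨h3', (mul_pos hpos hσ).trans_le h3'⟩, h4⟩

/-- **Properties of projection operators.**
Let `M₂` be symmetric psd of rank `k` with `ς_k[M₂] > 0` and `M̂₂` symmetric with
`Err := ‖M̂₂ − M₂‖₂/ς_k[M₂] ≤ 1/3`.  With `U, Û` the orthonormal left singular vectors of
`M₂, M̂₂` for their top `k` singular values (extracted from full singular value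
decompositions), and `S, Ŝ` the corresponding diagonal matrices of singular values:
(1) `(1+Err)·S ⪰ Ûᵀ M̂₂ Û = Ŝ ⪰ (1−Err)·S ≻ 0`;
(2) `ς_k[Ûᵀ U] ≥ √(1 − (9/4)Err²) > 0`;
(3) `ς_k[Ûᵀ M₂ Û] ≥ (1 − (9/4)Err²) ς_k[M₂] > 0`;
(4) `‖(I − ÛÛᵀ)UUᵀ‖₂ ≤ (3/2)Err`. -/
theorem projection_operator_properties
    (d k : ℕ) (hk : 0 < k) (hdk : k ≤ d)
    (M2 M2hat : Matrix (Fin d) (Fin d) ℝ)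
    (hM2psd : M2.PosSemidef) (hM2rank : M2.rank = k) (hςk : 0 < kthSV M2 k)
    (hM2hat : M2hat.IsHermitian)
    -- a full SVD of `M₂`, with `U` the first `k` left singular vectors
    (PU QU : Matrix (Fin d) (Fin d) ℝ) (sU : Fin d → ℝ)
    (hPU : PUᵀ * PU = 1) (hQU : QUᵀ * QU = 1)
    (hsU : ∀ j : Fin d, sU j = kthSV M2 ((j : ℕ) + 1))
    (hsvdU : M2 = PU * Matrix.diagonal sU * QUᵀ)
    (U : Matrix (Fin d) (Fin k) ℝ)
    (hU : U = Matrix.of fun i (j : Fin k) => PU i (Fin.castLE hdk j))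
    -- a full SVD of `M̂₂`, with `Û` the first `k` left singular vectors
    (PV QV : Matrix (Fin d) (Fin d) ℝ) (sV : Fin d → ℝ)
    (hPV : PVᵀ * PV = 1) (hQV : QVᵀ * QV = 1)
    (hsV : ∀ j : Fin d, sV j = kthSV M2hat ((j : ℕ) + 1))
    (hsvdV : M2hat = PV * Matrix.diagonal sV * QVᵀ)
    (Uhat : Matrix (Fin d) (Fin k) ℝ)
    (hUhat : Uhat = Matrix.of fun i (j : Fin k) => PV i (Fin.castLE hdk j))
    -- the diagonal matrices of top-`k` singular values
    (S Shat : Fin k → ℝ)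
    (hS : ∀ j : Fin k, S j = kthSV M2 ((j : ℕ) + 1))
    (hShat : ∀ j : Fin k, Shat j = kthSV M2hat ((j : ℕ) + 1))
    (Err : ℝ) (hErr : Err = spec (M2hat - M2) / kthSV M2 k) (hErr13 : Err ≤ 1 / 3) :
    -- (1)
    (((1 + Err) • Matrix.diagonal S - Uhatᵀ * M2hat * Uhat).PosSemidef ∧
      Uhatᵀ * M2hat * Uhat = Matrix.diagonal Shat ∧
      (Matrix.diagonal Shat - (1 - Err) • Matrix.diagonal S).PosSemidef ∧
      ((1 - Err) • Matrix.diagonal S).PosDef) ∧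
    -- (2)
    (Real.sqrt (1 - (9 / 4) * Err ^ 2) ≤ kthSV (Uhatᵀ * U) k ∧ 0 < kthSV (Uhatᵀ * U) k) ∧
    -- (3)
    ((1 - (9 / 4) * Err ^ 2) * kthSV M2 k ≤ kthSV (Uhatᵀ * M2 * Uhat) k ∧
      0 < kthSV (Uhatᵀ * M2 * Uhat) k) ∧
    -- (4)
    spec ((1 - Uhat * Uhatᵀ) * (U * Uᵀ)) ≤ (3 / 2) * Err := by
  obtain rfl : U = PU.submatrix id (Fin.castLE hdk) := hU
  obtain rfl : Uhat = PV.submatrix id (Fin.castLE hdk) := hUhat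
  obtain rfl : S = sU ∘ Fin.castLE hdk :=
    funext fun j ↦ (hS j).trans (hsU (Fin.castLE hdk j)).symm
  obtain rfl : Shat = sV ∘ Fin.castLE hdk :=
    funext fun j ↦ (hShat j).trans (hsV (Fin.castLE hdk j)).symm
  have svdU := IsSVD.of_kthSV hPU hQU hsU hsvdU
  have svdV := IsSVD.of_kthSV hPV hQV hsV hsvdV
  have hsym : M2ᵀ = M2 := conjTranspose_eq_transpose_of_trivial M2 ▸ hM2psd.1
  have hsymhat : M2hatᵀ = M2hat := conjTranspose_eq_transpose_of_trivial M2hat ▸ hM2hat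
  have hE : ‖M2hat - M2‖ = Err * kthSV M2 k := by
    rw [hErr, spec_eq_l2_opNorm, div_mul_cancel₀ _ hςk.ne']
  have hσS : ∀ j : Fin k, kthSV M2 k ≤ sU (Fin.castLE hdk j) := fun j ↦
    (hsU _).symm ▸ kthSV_antitone M2 (by omega) (by simp) (by omega)
  have hweyl : ∀ i, |sV i - sU i| ≤ Err * kthSV M2 k := fun i ↦
    hE ▸ svdU.abs_sub_le_l2_opNorm_sub svdV i
  have htail : ∀ i : Fin d, k ≤ (i : ℕ) → sU i = 0 := fun i ↦
    svdU.eq_zero_of_rank_le hM2rank.le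
  refine top_eigenspace_perturbation hk hςk hErr13
    (submatrix_transpose_mul_self hPU (Fin.castLE_injective hdk))
    (submatrix_transpose_mul_self hPV (Fin.castLE_injective hdk)) hsym hσS ?_ ?_ ?_ ?_
    (fun j ↦ hweyl _) hE.le
  · exact svdU.mul_submatrix_castLE hdk hsym (c := 0)
      (by simpa using hM2psd.dotProduct_mulVec_nonneg) fun j ↦ hςk.trans_le (hσS j)
  · exact norm_le_zero_iff.mp (svdU.l2_opNorm_one_sub_submatrix_castLE_mul_le hdk hsym le_rfl
      fun i hi ↦ (htail i hi).le)
  · refine svdV.mul_submatrix_castLE hdk hsymhat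
      (hE ▸ hM2psd.neg_mul_le_dotProduct_mulVec M2hat) fun j ↦ ?_
    have := abs_le.mp (hweyl (Fin.castLE hdk j))
    have := hσS j
    nlinarith
  · refine svdV.l2_opNorm_one_sub_submatrix_castLE_mul_le hdk hsymhat
      (hE ▸ norm_nonneg _) fun i hi ↦ ?_
    have := abs_le.mp (hweyl i)
    have := htail i hi
    linarith
end

section
/- Let M_2 = A diag(w) Aᵀ with A ∈ ℝ^{d×k} of rank k and w a positive probability vector, let M_3 := Σ_{i=1}^k w_i μ_i⊗μ_i⊗μ_i where μ_i are the columns of A, and let W ∈ ℝ^{d×k} be any matrix such that Wᵀ A diag(w)^{1/2} is orthogonal (equivalently Wᵀ M_2 W = I). Then the tensor T := M_3[W,W,W] ∈ ℝ^{k×k×k} satisfies T = Σ_{i=1}^k w_i^{−1/2} · v_i ⊗ v_i ⊗ v_i, where the vectors v_i := Wᵀ A diag(w)^{1/2} e_i = √(w_i)·Wᵀμ_i, i ∈ [k], are orthonormal; moreover, for any u ∈ ℝ^k, the matrix T[u] := M_3[W,W,Wu] ∈ ℝ^{k×k} has eigenvectors v_1,…,v_k with corresponding eigenvalues uᵀWᵀμ_1,…,uᵀWᵀμ_k.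 -/
open Matrix
open scoped BigOperators

/-- Multilinear contraction `Y[R₁,R₂,R₃]` of a third-order tensor along three matrices. -/
def tmap3 {d r : ℕ} (Y : Fin d → Fin d → Fin d → ℝ) (R1 R2 R3 : Matrix (Fin d) (Fin r) ℝ) :
    Fin r → Fin r → Fin r → ℝ :=
  fun j1 j2 j3 => ∑ i1, ∑ i2, ∑ i3, R1 i1 j1 * R2 i2 j2 * R3 i3 j3 * Y i1 i2 i3

/-- Contraction `Y[R₁,R₂,u]` of a third-order tensor along two matrices and a vector. -/
def tmapMat {d r : ℕ} (Y : Fin d → Fin d → Fin d → ℝ) (R1 R2 : Matrix (Fin d) (Fin r) ℝ)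
    (u : Fin d → ℝ) : Matrix (Fin r) (Fin r) ℝ :=
  Matrix.of fun j1 j2 => ∑ i1, ∑ i2, ∑ i3, R1 i1 j1 * R2 i2 j2 * u i3 * Y i1 i2 i3

private theorem keylem (d k : ℕ) (w : Fin k → ℝ) (M : Fin k → Fin d → ℝ)
    (f1 f2 f3 : Fin d → ℝ) :
    (∑ i1, ∑ i2, ∑ i3, f1 i1 * f2 i2 * f3 i3 * (∑ i, w i * (M i i1 * M i i2 * M i i3)))
    = ∑ i, w i * ((∑ i1, f1 i1 * M i i1) * (∑ i2, f2 i2 * M i i2) * (∑ i3, f3 i3 * M i i3)) := by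
  calc (∑ i1, ∑ i2, ∑ i3, f1 i1 * f2 i2 * f3 i3 * (∑ i, w i * (M i i1 * M i i2 * M i i3)))
      = ∑ i1, ∑ i2, ∑ i, ∑ i3, f1 i1 * f2 i2 * f3 i3 * (w i * (M i i1 * M i i2 * M i i3)) := by
        refine Finset.sum_congr rfl fun i1 _ => Finset.sum_congr rfl fun i2 _ => ?_
        rw [← Finset.sum_comm]
        exact Finset.sum_congr rfl fun i3 _ => Finset.mul_sum _ _ _
    _ = ∑ i1, ∑ i, ∑ i2, ∑ i3, f1 i1 * f2 i2 * f3 i3 * (w i * (M i i1 * M i i2 * M i i3)) :=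
        Finset.sum_congr rfl fun i1 _ => Finset.sum_comm
    _ = ∑ i, ∑ i1, ∑ i2, ∑ i3, f1 i1 * f2 i2 * f3 i3 * (w i * (M i i1 * M i i2 * M i i3)) :=
        Finset.sum_comm
    _ = ∑ i, w i * ((∑ i1, f1 i1 * M i i1) * (∑ i2, f2 i2 * M i i2) * (∑ i3, f3 i3 * M i i3)) := by
        refine Finset.sum_congr rfl fun i _ => ?_
        have hfac : (∑ i1, f1 i1 * M i i1) * (∑ i2, f2 i2 * M i i2) * (∑ i3, f3 i3 * M i i3)
            = ∑ i1, ∑ i2, ∑ i3, (f1 i1 * M i i1) * (f2 i2 * M i i2) * (f3 i3 * M i i3) := by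
          rw [Finset.sum_mul_sum, Finset.sum_mul]
          refine Finset.sum_congr rfl fun i1 _ => ?_
          rw [Finset.sum_mul]
          refine Finset.sum_congr rfl fun i2 _ => Finset.mul_sum _ _ _
        rw [hfac]
        simp only [Finset.mul_sum]
        exact Finset.sum_congr rfl fun i1 _ => Finset.sum_congr rfl fun i2 _ =>
          Finset.sum_congr rfl fun i3 _ => by ring

private theorem auxfac (s p1 p2 p3 : ℝ) (hs : s ≠ 0) :
    1 / s * (s * p1 * (s * p2) * (s * p3)) = s * s * (p1 * p2 * p3) := by
  field_simp

/-- **Structure of the whitened tensor.**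
Let `M₂ = A diag(w) Aᵀ` with `A` of rank `k` and `w` a positive probability vector, let
`M₃ = ∑ i, w i μ_i⊗μ_i⊗μ_i`, and let `W` be such that `Wᵀ A diag(w)^{1/2}` is
orthogonal. Then `T := M₃[W,W,W] = ∑ i, w_i^{−1/2} v_i⊗v_i⊗v_i`, where the vectors
`v_i := √(w i) • Wᵀ μ_i` (the columns of `Wᵀ A diag(w)^{1/2}`) are orthonormal;
moreover, for any `u ∈ ℝ^k`, `T[u] := M₃[W,W,Wu]` has eigenvectors `v_1, …, v_k`
with corresponding eigenvalues `uᵀWᵀμ_1, …, uᵀWᵀμ_k`. -/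
theorem whitened_tensor_structure
    (d k : ℕ)
    (A : Matrix (Fin d) (Fin k) ℝ) (hrank : A.rank = k)
    (μ : Fin k → Fin d → ℝ) (hμ : ∀ i, μ i = fun r => A r i)
    (w : Fin k → ℝ) (hw_pos : ∀ i, 0 < w i) (hw_sum : ∑ i, w i = 1)
    (M2 : Matrix (Fin d) (Fin d) ℝ) (hM2 : M2 = A * Matrix.diagonal w * Aᵀ)
    (M3 : Fin d → Fin d → Fin d → ℝ)
    (hM3 : ∀ a b c, M3 a b c = ∑ i, w i * (μ i a * μ i b * μ i c))
    (W : Matrix (Fin d) (Fin k) ℝ)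
    -- `Wᵀ A diag(w)^{1/2}` is orthogonal (equivalently `Wᵀ M₂ W = I`)
    (hWorth : (Wᵀ * A * Matrix.diagonal fun i => Real.sqrt (w i))ᵀ *
        (Wᵀ * A * Matrix.diagonal fun i => Real.sqrt (w i)) = 1 ∧
      (Wᵀ * A * Matrix.diagonal fun i => Real.sqrt (w i)) *
        (Wᵀ * A * Matrix.diagonal fun i => Real.sqrt (w i))ᵀ = 1)
    (v : Fin k → Fin k → ℝ) (hv : ∀ i, v i = Real.sqrt (w i) • (Wᵀ *ᵥ μ i)) :
    -- structure of the whitened tensor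
    (∀ j1 j2 j3, tmap3 M3 W W W j1 j2 j3 =
        ∑ i, (1 / Real.sqrt (w i)) * (v i j1 * v i j2 * v i j3)) ∧
    -- the `v i` are orthonormal
    (∀ i j, v i ⬝ᵥ v j = if i = j then 1 else 0) ∧
    -- eigendecomposition of `T[u]`
    (∀ u : Fin k → ℝ, ∀ i,
        tmapMat M3 W W (W *ᵥ u) *ᵥ v i = (u ⬝ᵥ (Wᵀ *ᵥ μ i)) • v i) := by
  have hs0 : ∀ i, Real.sqrt (w i) ≠ 0 := fun i => ne_of_gt (Real.sqrt_pos.mpr (hw_pos i))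
  have hss : ∀ i, Real.sqrt (w i) * Real.sqrt (w i) = w i :=
    fun i => Real.mul_self_sqrt (hw_pos i).le
  have hvj : ∀ i j, v i j = Real.sqrt (w i) * ∑ r, W r j * μ i r := by
    intro i j
    rw [hv]
    simp [Matrix.mulVec, dotProduct, Matrix.transpose_apply]
  -- orthonormality
  have horth : ∀ i j, v i ⬝ᵥ v j = if i = j then 1 else 0 := by
    intro i j
    have hB : ∀ (l i : Fin k),
        (Wᵀ * A * Matrix.diagonal fun i => Real.sqrt (w i)) l i = v i l := by
      intro l i
      rw [Matrix.mul_diagonal, hvj, Matrix.mul_apply]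
      simp only [Matrix.transpose_apply, hμ]
      ring
    have h1 := congrFun (congrFun hWorth.1 i) j
    rw [Matrix.mul_apply] at h1
    simp only [Matrix.transpose_apply, hB, Matrix.one_apply] at h1
    simpa [dotProduct] using h1
  refine ⟨?_, horth, ?_⟩
  · intro j1 j2 j3
    calc tmap3 M3 W W W j1 j2 j3
        = ∑ i, w i * ((∑ i1, W i1 j1 * μ i i1) * (∑ i2, W i2 j2 * μ i i2) *
            (∑ i3, W i3 j3 * μ i i3)) := by
          simp only [tmap3, hM3]
          exact keylem d k w μ (fun r => W r j1) (fun r => W r j2) (fun r => W r j3)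
      _ = ∑ i, (1 / Real.sqrt (w i)) * (v i j1 * v i j2 * v i j3) := by
          refine Finset.sum_congr rfl fun i _ => ?_
          rw [hvj i j1, hvj i j2, hvj i j3, auxfac _ _ _ _ (hs0 i), hss]
  · intro u i₀
    set c : Fin k → ℝ := fun i => u ⬝ᵥ (Wᵀ *ᵥ μ i) with hc
    have hci : ∀ i, (∑ i3, (W *ᵥ u) i3 * μ i i3) = c i := by
      intro i
      simp only [hc, Matrix.mulVec, dotProduct, Matrix.transpose_apply, Finset.sum_mul,
        Finset.mul_sum]
      rw [Finset.sum_comm]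
      exact Finset.sum_congr rfl fun m _ => Finset.sum_congr rfl fun r _ => by ring
    have hT : ∀ j1 j2, tmapMat M3 W W (W *ᵥ u) j1 j2 = ∑ i, c i * (v i j1 * v i j2) := by
      intro j1 j2
      calc tmapMat M3 W W (W *ᵥ u) j1 j2
          = ∑ i, w i * ((∑ i1, W i1 j1 * μ i i1) * (∑ i2, W i2 j2 * μ i i2) *
              (∑ i3, (W *ᵥ u) i3 * μ i i3)) := by
            simp only [tmapMat, Matrix.of_apply, hM3]
            exact keylem d k w μ (fun r => W r j1) (fun r => W r j2) (W *ᵥ u)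
        _ = ∑ i, c i * (v i j1 * v i j2) := by
            refine Finset.sum_congr rfl fun i _ => ?_
            rw [hci, hvj i j1, hvj i j2]
            conv_lhs => rw [← hss i]
            ring
    funext j1
    simp only [Matrix.mulVec, dotProduct, Pi.smul_apply, smul_eq_mul]
    calc ∑ j2, tmapMat M3 W W (W *ᵥ u) j1 j2 * v i₀ j2
        = ∑ j2, (∑ i, c i * (v i j1 * v i j2)) * v i₀ j2 := by
          exact Finset.sum_congr rfl fun j2 _ => by rw [hT]
      _ = ∑ i, ∑ j2, c i * (v i j1 * v i j2) * v i₀ j2 := by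
          simp only [Finset.sum_mul]
          exact Finset.sum_comm
      _ = ∑ i, (c i * v i j1) * (v i ⬝ᵥ v i₀) := by
          refine Finset.sum_congr rfl fun i _ => ?_
          rw [dotProduct, Finset.mul_sum]
          exact Finset.sum_congr rfl fun j2 _ => by ring
      _ = c i₀ * v i₀ j1 := by
          simp only [horth, mul_ite, mul_one, mul_zero]
          simp
end

section
/- Let T, T̂ ∈ ℝ^{k×k} be symmetric matrices, let γ > 0, and set Err_T := ‖T̂ − T‖₂/γ. Assume Err_T ≤ 1/4 and that the eigenvalues λ̂_1,…,λ̂_k of T̂ satisfy min( {|λ̂_i − λ̂_j| : i ≠ j} ∪ {|λ̂_i| : i ∈ [k]} ) ≥ γ − 2·Err_T·γ. Let {(v_i, λ_i)} and {(v̂_i, λ̂_i)} be orthonormal eigenvector/eigenvalue pairs of T and T̂ respectively. Then there is a permutation π of [k] and signs s_1,…,s_k ∈ {±1} such that for all i ∈ [k]: ‖v_i − s_i·v̂_{π(i)}‖₂ ≤ 4√2·Err_T and |λ_i − λ̂_{π(i)}| ≤ Err_T·γ. -/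
/-!
Both eigenbases are orthonormal bases of `ℝᵏ`, and `T, T̂` act diagonally on them, so every
quadratic form `⟪x, T x⟫` is a weighted sum of squared coordinates. Weyl's inequality follows from
the dimension count of Courant–Fischer: some unit vector is orthogonal to the `a` lowest
eigenvectors of one matrix and to the `k - a - 1` highest of the other, and there the two quadratic
forms differ by at most `‖T̂ - T‖`. Matching sorted spectra gives `π` with
`|λᵢ - λ̂_{π i}| ≤ Err_T γ`, so the gap condition keeps every other `λ̂_l` at distance `≥ γ - 3 Err_T γ ≥ γ / 4` from `λᵢ`.
Expanding `(T̂ - T) vᵢ` in the basis `v̂` (the Davis–Kahan argument) then bounds the weight of `vᵢ`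
off `v̂_{π i}` by `(4 Err_T)²`, and the sign `sᵢ` of `⟪vᵢ, v̂_{π i}⟫` turns this into
`‖vᵢ - sᵢ v̂_{π i}‖² ≤ 2 (1 - ⟪vᵢ, v̂_{π i}⟫²) ≤ 32 Err_T²`.
-/

open Matrix
open scoped BigOperators

noncomputable def l2norm {m : ℕ} (v : Fin m → ℝ) : ℝ :=
  Real.sqrt (∑ i, v i ^ 2)

noncomputable def gapStat {k : ℕ} (lam : Fin k → ℝ) : ℝ :=
  sInf ({a | ∃ i j, i ≠ j ∧ a = |lam i - lam j|} ∪ {a | ∃ i, a = |lam i|})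

open scoped RealInnerProductSpace

variable {E : Type*} [NormedAddCommGroup E] [InnerProductSpace ℝ E]

theorem exists_ne_zero_forall_inner_eq_zero [FiniteDimensional ℝ E] (s : Finset E)
    (hs : s.card < Module.finrank ℝ E) : ∃ x ≠ 0, ∀ y ∈ s, ⟪y, x⟫ = 0 := by
  set K := Submodule.span ℝ (s : Set E)
  have hK : Module.finrank ℝ K ≤ s.card := finrank_span_finset_le_card s
  have hKperp : Kᗮ ≠ ⊥ := by
    intro h
    have := K.finrank_add_finrank_orthogonal
    rw [h, finrank_bot] at this
    omega
  obtain ⟨x, hx, hx0⟩ := Submodule.exists_mem_ne_zero_of_ne_bot hKperp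
  exact ⟨x, hx0, fun y hy => Submodule.inner_right_of_mem_orthogonal (Submodule.subset_span hy) hx⟩

namespace OrthonormalBasis

variable {ι : Type*} [Fintype ι] {A : E →L[ℝ] E} {b : OrthonormalBasis ι ℝ E} {α : ι → ℝ}

theorem inner_apply_of_apply_eq_smul (hb : ∀ i, A (b i) = α i • b i) (i : ι) (x : E) :
    ⟪b i, A x⟫ = α i * ⟪b i, x⟫ := by
  conv_lhs => rw [← b.sum_repr' x]
  simp only [map_sum, map_smul, hb, smul_smul]
  rw [b.orthonormal.inner_right_fintype]
  ring

theorem inner_self_apply_of_apply_eq_smul (hb : ∀ i, A (b i) = α i • b i) (x : E) :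
    ⟪x, A x⟫ = ∑ i, α i * ⟪b i, x⟫ ^ 2 := by
  rw [← b.sum_inner_mul_inner]
  refine Finset.sum_congr rfl fun i _ => ?_
  rw [inner_apply_of_apply_eq_smul hb, real_inner_comm]
  ring

theorem mul_norm_sq_le_inner_self_apply (hb : ∀ i, A (b i) = α i • b i) {x : E} {c : ℝ}
    (hc : ∀ i, ⟪b i, x⟫ ≠ 0 → c ≤ α i) : c * ‖x‖ ^ 2 ≤ ⟪x, A x⟫ := by
  rw [inner_self_apply_of_apply_eq_smul hb, ← b.sum_sq_inner_right, Finset.mul_sum]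
  refine Finset.sum_le_sum fun i _ => ?_
  by_cases hi : ⟪b i, x⟫ = 0
  · simp [hi]
  · exact mul_le_mul_of_nonneg_right (hc i hi) (sq_nonneg _)

theorem inner_self_apply_le_mul_norm_sq (hb : ∀ i, A (b i) = α i • b i) {x : E} {c : ℝ}
    (hc : ∀ i, ⟪b i, x⟫ ≠ 0 → α i ≤ c) : ⟪x, A x⟫ ≤ c * ‖x‖ ^ 2 := by
  have hb' : ∀ i, (-A) (b i) = (-α) i • b i := fun i => by simp [hb]
  have := mul_norm_sq_le_inner_self_apply hb' fun i hi => neg_le_neg (hc i hi)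
  rw [_root_.neg_apply, inner_neg_right] at this
  linarith

end OrthonormalBasis

section Weyl

variable {n : ℕ} {A B : E →L[ℝ] E} {u w : OrthonormalBasis (Fin n) ℝ E} {α β : Fin n → ℝ}

theorem eigenvalue_le_eigenvalue_add_norm_sub (hu : ∀ i, A (u i) = α i • u i)
    (hw : ∀ i, B (w i) = β i • w i) (hα : Monotone α) (hβ : Monotone β) (a : Fin n) :
    α a ≤ β a + ‖A - B‖ := by
  classical
  have : FiniteDimensional ℝ E := u.toBasis.finiteDimensional_of_finite
  have hcard : ((Finset.Iio a).image u ∪ (Finset.Ioi a).image w).card < Module.finrank ℝ E := by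
    rw [Module.finrank_eq_card_basis u.toBasis, Fintype.card_fin]
    calc _ ≤ ((Finset.Iio a).image u).card + ((Finset.Ioi a).image w).card :=
          Finset.card_union_le _ _
      _ ≤ (Finset.Iio a).card + (Finset.Ioi a).card :=
          add_le_add Finset.card_image_le Finset.card_image_le
      _ < n := by rw [Fin.card_Iio, Fin.card_Ioi]; omega
  obtain ⟨x, hx0, hx⟩ := exists_ne_zero_forall_inner_eq_zero _ hcard
  have hAx : α a * ‖x‖ ^ 2 ≤ ⟪x, A x⟫ := by
    refine u.mul_norm_sq_le_inner_self_apply hu fun i hi => hα (not_lt.1 fun hia => hi ?_)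
    exact hx _ (Finset.mem_union_left _ (Finset.mem_image_of_mem _ (Finset.mem_Iio.2 hia)))
  have hBx : ⟪x, B x⟫ ≤ β a * ‖x‖ ^ 2 := by
    refine w.inner_self_apply_le_mul_norm_sq hw fun i hi => hβ (not_lt.1 fun hai => hi ?_)
    exact hx _ (Finset.mem_union_right _ (Finset.mem_image_of_mem _ (Finset.mem_Ioi.2 hai)))
  have hABx : ⟪x, (A - B) x⟫ ≤ ‖A - B‖ * ‖x‖ ^ 2 :=
    calc ⟪x, (A - B) x⟫ ≤ ‖x‖ * ‖(A - B) x‖ := real_inner_le_norm _ _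
      _ ≤ ‖x‖ * (‖A - B‖ * ‖x‖) := by gcongr; exact (A - B).le_opNorm x
      _ = ‖A - B‖ * ‖x‖ ^ 2 := by ring
  rw [_root_.sub_apply, inner_sub_right] at hABx
  exact le_of_mul_le_mul_right (by linarith) (by positivity : 0 < ‖x‖ ^ 2)

theorem exists_perm_abs_sub_eigenvalue_le (hu : ∀ i, A (u i) = α i • u i)
    (hw : ∀ i, B (w i) = β i • w i) :
    ∃ π : Equiv.Perm (Fin n), ∀ i, |α i - β (π i)| ≤ ‖A - B‖ := by
  set σ := Tuple.sort α
  set τ := Tuple.sort β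
  have hu' : ∀ i, A (u.reindex σ.symm i) = (α ∘ σ) i • u.reindex σ.symm i := by
    simp [hu]
  have hw' : ∀ i, B (w.reindex τ.symm i) = (β ∘ τ) i • w.reindex τ.symm i := by
    simp [hw]
  refine ⟨σ.symm.trans τ, fun i => abs_sub_le_iff.2 ⟨?_, ?_⟩⟩
  · have := eigenvalue_le_eigenvalue_add_norm_sub hu' hw' (Tuple.monotone_sort α)
      (Tuple.monotone_sort β) (σ.symm i)
    simp only [Function.comp_apply, Equiv.apply_symm_apply] at this
    simp only [Equiv.trans_apply]
    linarith
  · have := eigenvalue_le_eigenvalue_add_norm_sub hw' hu' (Tuple.monotone_sort β)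
      (Tuple.monotone_sort α) (σ.symm i)
    simp only [Function.comp_apply, Equiv.apply_symm_apply, norm_sub_rev B] at this
    simp only [Equiv.trans_apply]
    linarith

end Weyl

section DavisKahan

theorem exists_sign_norm_sub_sq_le {x y : E} (hx : ‖x‖ = 1) (hy : ‖y‖ = 1) :
    ∃ s : ℝ, (s = 1 ∨ s = -1) ∧ ‖x - s • y‖ ^ 2 ≤ 2 * (1 - ⟪y, x⟫ ^ 2) := by
  have hc : |⟪y, x⟫| ≤ 1 := by simpa [hx, hy] using abs_real_inner_le_norm y x
  have hsq : ⟪y, x⟫ ^ 2 ≤ |⟪y, x⟫| := by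
    rw [← sq_abs]; nlinarith [abs_nonneg ⟪y, x⟫]
  refine ⟨if 0 ≤ ⟪y, x⟫ then 1 else -1, by split_ifs <;> simp, ?_⟩
  rw [norm_sub_sq_real, norm_smul, inner_smul_right, real_inner_comm y x, hx, hy]
  split_ifs with h
  · rw [abs_of_nonneg h] at hsq
    norm_num
    linarith
  · rw [abs_of_neg (not_le.1 h)] at hsq
    norm_num
    linarith

variable {ι : Type*} [Fintype ι] [DecidableEq ι] {A B : E →L[ℝ] E} {w : OrthonormalBasis ι ℝ E}
  {β : ι → ℝ}

theorem sum_erase_inner_sq_le_of_gap (hw : ∀ i, B (w i) = β i • w i) {x : E} {μ : ℝ}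
    (hx : A x = μ • x) {δ : ℝ} (hδ : 0 ≤ δ) {j : ι} (hgap : ∀ l ≠ j, δ ≤ |β l - μ|) :
    δ ^ 2 * ∑ l ∈ Finset.univ.erase j, ⟪w l, x⟫ ^ 2 ≤ (‖A - B‖ * ‖x‖) ^ 2 := by
  have hr : ∀ l, ⟪w l, (B - A) x⟫ = (β l - μ) * ⟪w l, x⟫ := by
    intro l
    rw [_root_.sub_apply, inner_sub_right, w.inner_apply_of_apply_eq_smul hw, hx, inner_smul_right]
    ring
  calc δ ^ 2 * ∑ l ∈ Finset.univ.erase j, ⟪w l, x⟫ ^ 2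
      ≤ ∑ l ∈ Finset.univ.erase j, ((β l - μ) * ⟪w l, x⟫) ^ 2 := by
        rw [Finset.mul_sum]
        refine Finset.sum_le_sum fun l hl => ?_
        rw [mul_pow, ← sq_abs (β l - μ)]
        gcongr
        exact hgap l (Finset.ne_of_mem_erase hl)
    _ ≤ ∑ l, ((β l - μ) * ⟪w l, x⟫) ^ 2 :=
        Finset.sum_le_sum_of_subset_of_nonneg (Finset.subset_univ _) fun _ _ _ => sq_nonneg _
    _ = ‖(B - A) x‖ ^ 2 := by simp only [← hr, w.sum_sq_inner_right]
    _ ≤ (‖A - B‖ * ‖x‖) ^ 2 := by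
        rw [norm_sub_rev]; gcongr; exact (B - A).le_opNorm x

theorem exists_sign_norm_sub_le_of_gap (hw : ∀ i, B (w i) = β i • w i) {x : E} {μ : ℝ}
    (hx : A x = μ • x) (hx1 : ‖x‖ = 1) {δ : ℝ} (hδ : 0 < δ) {j : ι}
    (hgap : ∀ l ≠ j, δ ≤ |β l - μ|) :
    ∃ s : ℝ, (s = 1 ∨ s = -1) ∧ ‖x - s • w j‖ ≤ √2 * ‖A - B‖ / δ := by
  obtain ⟨s, hs, hsx⟩ := exists_sign_norm_sub_sq_le hx1 (w.norm_eq_one j)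
  have htail := sum_erase_inner_sq_le_of_gap hw hx hδ.le hgap
  have hparseval : ∑ l ∈ Finset.univ.erase j, ⟪w l, x⟫ ^ 2 + ⟪w j, x⟫ ^ 2 = 1 := by
    rw [Finset.sum_erase_add _ _ (Finset.mem_univ j), w.sum_sq_inner_right, hx1, one_pow]
  refine ⟨s, hs, (pow_le_pow_iff_left₀ (norm_nonneg _) (by positivity) two_ne_zero).1 ?_⟩
  rw [div_pow, mul_pow, Real.sq_sqrt zero_le_two, le_div_iff₀ (by positivity)]
  rw [hx1, mul_one] at htail
  nlinarith

end DavisKahan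

section Matrices

theorem l2norm_eq_norm_toLp {m : ℕ} (x : Fin m → ℝ) : l2norm x = ‖WithLp.toLp 2 x‖ := by
  simp [l2norm, EuclideanSpace.norm_eq]

theorem gapStat_le_abs_sub {k : ℕ} (lam : Fin k → ℝ) {i j : Fin k} (hij : i ≠ j) :
    gapStat lam ≤ |lam i - lam j| := by
  refine csInf_le ⟨0, ?_⟩ (Or.inl ⟨i, j, hij, rfl⟩)
  rintro a (⟨i, j, -, rfl⟩ | ⟨i, rfl⟩) <;> positivity

theorem exists_orthonormalBasis_toLp_of_dotProduct {n : Type*} [Fintype n] [DecidableEq n]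
    (v : n → n → ℝ) (hv : ∀ i j, v i ⬝ᵥ v j = if i = j then (1 : ℝ) else 0) :
    ∃ b : OrthonormalBasis n ℝ (EuclideanSpace ℝ n), ∀ i, b i = WithLp.toLp 2 (v i) := by
  have hon : Orthonormal ℝ fun i => WithLp.toLp 2 (v i) := by
    rw [orthonormal_iff_ite]
    intro i j
    rw [EuclideanSpace.inner_toLp_toLp, star_trivial, dotProduct_comm, hv]
  refine ⟨OrthonormalBasis.mk hon (hon.linearIndependent.span_eq_top_of_card_eq_finrank' ?_).ge,
    fun i => by simp⟩
  simp

end Matrices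

theorem eigendecomposition_accuracy_general
    (k : ℕ)
    (T That : Matrix (Fin k) (Fin k) ℝ)
    (γ : ℝ) (hγ : 0 < γ)
    (ErrT : ℝ) (hErrT : ErrT = spec (That - T) / γ) (hErrT14 : ErrT ≤ 1 / 4)
    -- orthonormal eigendecompositions of `T` and `T̂`
    (v : Fin k → Fin k → ℝ) (lam : Fin k → ℝ)
    (hv_orth : ∀ i j, v i ⬝ᵥ v j = if i = j then (1 : ℝ) else 0)
    (hv_eig : ∀ i, T *ᵥ v i = lam i • v i)
    (vhat : Fin k → Fin k → ℝ) (lamhat : Fin k → ℝ)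
    (hvhat_orth : ∀ i j, vhat i ⬝ᵥ vhat j = if i = j then (1 : ℝ) else 0)
    (hvhat_eig : ∀ i, That *ᵥ vhat i = lamhat i • vhat i)
    -- the eigenvalue-gap condition for `T̂`
    (hgap : γ - 2 * ErrT * γ ≤ gapStat lamhat) :
    ∃ (π : Equiv.Perm (Fin k)) (s : Fin k → ℝ),
      (∀ i, s i = 1 ∨ s i = -1) ∧
      (∀ i, l2norm (v i - s i • vhat (π i)) ≤ 4 * Real.sqrt 2 * ErrT) ∧
      (∀ i, |lam i - lamhat (π i)| ≤ ErrT * γ) := by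
  obtain ⟨u, hu⟩ := exists_orthonormalBasis_toLp_of_dotProduct v hv_orth
  obtain ⟨w, hw⟩ := exists_orthonormalBasis_toLp_of_dotProduct vhat hvhat_orth
  set A := (toEuclideanLin T).toContinuousLinearMap
  set B := (toEuclideanLin That).toContinuousLinearMap
  have hAu : ∀ i, A (u i) = lam i • u i := fun i => by
    simp [A, hu, hv_eig]
  have hBw : ∀ i, B (w i) = lamhat i • w i := fun i => by
    simp [B, hw, hvhat_eig]
  have hε : ‖A - B‖ = ErrT * γ := by
    rw [norm_sub_rev, hErrT, div_mul_cancel₀ _ hγ.ne', spec, map_sub, map_sub]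
  obtain ⟨π, hπ⟩ := exists_perm_abs_sub_eigenvalue_le hAu hBw
  rw [hε] at hπ
  have hsep : ∀ i, ∀ l ≠ π i, γ / 4 ≤ |lamhat l - lam i| := fun i l hl => by
    have hε4 : ErrT * γ ≤ γ / 4 := by nlinarith
    linarith [gapStat_le_abs_sub lamhat hl, abs_sub_le (lamhat l) (lam i) (lamhat (π i)), hπ i]
  choose s hs hvs using fun i =>
    exists_sign_norm_sub_le_of_gap hBw (hAu i) (u.norm_eq_one i) (by positivity) (hsep i)
  refine ⟨π, s, hs, fun i => ?_, hπ⟩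
  rw [l2norm_eq_norm_toLp, WithLp.toLp_sub, WithLp.toLp_smul, ← hu, ← hw]
  calc _ ≤ √2 * ‖A - B‖ / (γ / 4) := hvs i
    _ = 4 * √2 * ErrT := by rw [hε]; field_simp

/-- **Accuracy of the eigendecomposition.**
Let `T, T̂` be symmetric `k×k` matrices, `γ > 0`, `Err_T := ‖T̂ − T‖₂/γ ≤ 1/4`, and
suppose the eigenvalues of `T̂` satisfy the gap condition
`min({|λ̂_i − λ̂_j| : i ≠ j} ∪ {|λ̂_i|}) ≥ γ − 2 Err_T γ`. If `{(v_i, λ_i)}` and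
`{(v̂_i, λ̂_i)}` are orthonormal eigenvector/eigenvalue pairs of `T` and `T̂`, then
there is a permutation `π` and signs `s_i ∈ {±1}` with
`‖v_i − s_i v̂_{π i}‖₂ ≤ 4√2 Err_T` and `|λ_i − λ̂_{π i}| ≤ Err_T γ` for all `i`. -/
theorem eigendecomposition_accuracy
    (k : ℕ)
    (T That : Matrix (Fin k) (Fin k) ℝ)
    (hT_sym : T.IsHermitian) (hThat_sym : That.IsHermitian)
    (γ : ℝ) (hγ : 0 < γ)
    (ErrT : ℝ) (hErrT : ErrT = spec (That - T) / γ) (hErrT14 : ErrT ≤ 1 / 4)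
    -- orthonormal eigendecompositions of `T` and `T̂`
    (v : Fin k → Fin k → ℝ) (lam : Fin k → ℝ)
    (hv_orth : ∀ i j, v i ⬝ᵥ v j = if i = j then (1 : ℝ) else 0)
    (hv_eig : ∀ i, T *ᵥ v i = lam i • v i)
    (vhat : Fin k → Fin k → ℝ) (lamhat : Fin k → ℝ)
    (hvhat_orth : ∀ i j, vhat i ⬝ᵥ vhat j = if i = j then (1 : ℝ) else 0)
    (hvhat_eig : ∀ i, That *ᵥ vhat i = lamhat i • vhat i)
    -- the eigenvalue-gap condition for `T̂`
    (hgap : γ - 2 * ErrT * γ ≤ gapStat lamhat) :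
    ∃ (π : Equiv.Perm (Fin k)) (s : Fin k → ℝ),
      (∀ i, s i = 1 ∨ s i = -1) ∧
      (∀ i, l2norm (v i - s i • vhat (π i)) ≤ 4 * Real.sqrt 2 * ErrT) ∧
      (∀ i, |lam i - lamhat (π i)| ≤ ErrT * γ) :=
  eigendecomposition_accuracy_general k T That γ hγ ErrT hErrT hErrT14 v lam hv_orth hv_eig vhat
    lamhat hvhat_orth hvhat_eig hgap
end
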